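/- arXiv:2406.11649 — 13 statements merged into one kernel-verified Lean document; each statement's English description precedes it below -/
import Mathlib

section
/- Fix integers z ≥ 1, k ≥ 1, d ≥ 1 and reals c_A ≥ 100, θ ≥ 1. Let P be a finite multiset of n ≥ 2 points of the closed unit ball B(0,1) ⊆ ℝ^d and set L = ⌈log₂ n⌉. For each level ℓ ∈ {1,…,L}, let N_ℓ ⊆ B(0,1) be a finite set with the covering property that every point of B(0,1) is within Euclidean distance 2^{−ℓ}/2 of some point of N_ℓ. Suppose that for each ℓ we are given a set C_ℓ ⊆ N_ℓ of cardinality 2k such that: (1) any two distinct points of C_ℓ are at distance greater than 3·2^{−ℓ}; and (2) for every c ∈ C_ℓ and every y ∈ N_ℓ with dist(y, C_ℓ) ≥ c_A·2^{−ℓ}, one has val(B(c, 2^{−ℓ})) ≥ val(B(y, 2^{−ℓ})) − θ. Set C = ∪_{ℓ=1}^L C_ℓ. Then there exists a constant K depending only on z and c_A such that for every subset Γ ⊆ B(0,1) with |Γ| = k, cost_z(P, C) ≤ K·cost_z(P, Γ) + K·k·θ. -/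
open Finset in
private lemma msum_nonneg {α : Type*} (s : Multiset α) (f : α → ℝ)
    (h : ∀ a ∈ s, 0 ≤ f a) : 0 ≤ (s.map f).sum := by
  apply Multiset.sum_nonneg
  intro x hx
  obtain ⟨a, ha, rfl⟩ := Multiset.mem_map.1 hx
  exact h a ha

private lemma msum_le {α : Type*} (s : Multiset α) (f g : α → ℝ)
    (h : ∀ a ∈ s, f a ≤ g a) : (s.map f).sum ≤ (s.map g).sum :=
  Multiset.sum_map_le_sum_map f g h

private lemma msum_mono_of_le {α : Type*} {s t : Multiset α} (hts : t ≤ s) (f : α → ℝ)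
    (h : ∀ a ∈ s, 0 ≤ f a) : (t.map f).sum ≤ (s.map f).sum := by
  obtain ⟨u, rfl⟩ := Multiset.le_iff_exists_add.1 hts
  rw [Multiset.map_add, Multiset.sum_add]
  have h0 : 0 ≤ (u.map f).sum :=
    msum_nonneg u f (fun a ha => h a (Multiset.mem_add.2 (Or.inr ha)))
  linarith

private lemma msum_fiber {α β : Type*} [DecidableEq β] (g : α → β) (t : Finset β) (f : α → ℝ) :
    ∀ s : Multiset α, (∀ a ∈ s, g a ∈ t) →
      (s.map f).sum = ∑ b ∈ t, ((s.filter (fun a => g a = b)).map f).sum := by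
  intro s
  induction s using Multiset.induction_on with
  | empty => intro _; simp
  | cons a s ih =>
    intro h
    have ha : g a ∈ t := h a (Multiset.mem_cons_self a s)
    rw [Multiset.map_cons, Multiset.sum_cons, ih (fun x hx => h x (Multiset.mem_cons_of_mem hx))]
    have key : ∀ b ∈ t, (((a ::ₘ s).filter (fun x => g x = b)).map f).sum
        = (if g a = b then f a else 0) + ((s.filter (fun x => g x = b)).map f).sum := by
      intro b _
      rw [Multiset.filter_cons]
      by_cases hb : g a = b
      · simp [hb]
      · simp [hb]
    rw [Finset.sum_congr rfl key, Finset.sum_add_distrib,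
      Finset.sum_ite_eq t (g a) (fun _ => f a), if_pos ha]

private lemma msum_filter_eq {α : Type*} (s : Multiset α) (p : α → Prop) [DecidablePred p]
    (f : α → ℝ) :
    ((s.filter p).map f).sum = (s.map (fun a => if p a then f a else 0)).sum := by
  induction s using Multiset.induction_on with
  | empty => simp
  | cons a s ih =>
    rw [Multiset.filter_cons]
    by_cases hp : p a
    · simp [hp, ih]
    · simp [hp, ih]

private lemma msum_swap {α β : Type*} (s : Multiset α) (t : Finset β) (F : β → α → ℝ) :
    (s.map (fun a => ∑ b ∈ t, F b a)).sum = ∑ b ∈ t, (s.map (F b)).sum := by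
  induction s using Multiset.induction_on with
  | empty => simp
  | cons a s ih => simp [ih, Finset.sum_add_distrib]

private lemma pow_add_le_aux (z : ℕ) (a b : ℝ) (ha : 0 ≤ a) (hb : 0 ≤ b) :
    (a + b) ^ z ≤ 2 ^ z * a ^ z + 2 ^ z * b ^ z := by
  rcases le_total a b with h | h
  · have h1 : a + b ≤ 2 * b := by linarith
    have h2 : (a + b) ^ z ≤ (2 * b) ^ z := pow_le_pow_left₀ (by linarith) h1 z
    rw [mul_pow] at h2
    have h3 : 0 ≤ 2 ^ z * a ^ z := by positivity
    linarith
  · have h1 : a + b ≤ 2 * a := by linarith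
    have h2 : (a + b) ^ z ≤ (2 * a) ^ z := pow_le_pow_left₀ (by linarith) h1 z
    rw [mul_pow] at h2
    have h3 : 0 ≤ 2 ^ z * b ^ z := by positivity
    linarith

private lemma geom_bound (L : ℕ) (X : ℝ) (hX : 0 ≤ X) :
    ∑ ℓ ∈ Finset.Icc 1 L, (if (2:ℝ) ^ (-(ℓ:ℤ)) ≤ X then (2:ℝ) ^ (-(ℓ:ℤ)) else 0) ≤ 2 * X := by
  have key : ∀ M : ℕ,
      ∑ ℓ ∈ Finset.Icc 1 M, (if (2:ℝ) ^ (-(ℓ:ℤ)) ≤ X then (2:ℝ) ^ (-(ℓ:ℤ)) else 0)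
        ≤ 2 * X - (if (2:ℝ) ^ (-(M:ℤ)) ≤ X then (2:ℝ) ^ (-(M:ℤ)) else 0) := by
    intro M
    induction M with
    | zero =>
      simp only [Finset.Icc_eq_empty_of_lt (by norm_num : (0:ℕ) < 1), Finset.sum_empty,
        Nat.cast_zero, neg_zero, zpow_zero]
      split <;> linarith
    | succ M ih =>
      have hcast : -(((M+1:ℕ)):ℤ) = -(M:ℤ) + (-1) := by push_cast; ring
      have hdouble : (2:ℝ) ^ (-(M:ℤ)) = 2 * (2:ℝ) ^ (-(((M+1:ℕ)):ℤ)) := by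
        rw [hcast, zpow_add₀ (by norm_num : (2:ℝ) ≠ 0)]
        norm_num
        ring
      have hpos1 : (0:ℝ) < (2:ℝ) ^ (-(((M+1:ℕ)):ℤ)) := zpow_pos (by norm_num) _
      rw [Finset.sum_Icc_succ_top (by omega : 1 ≤ M + 1)]
      by_cases h1 : (2:ℝ) ^ (-(((M+1:ℕ)):ℤ)) ≤ X
      · rw [if_pos h1]
        by_cases h0 : (2:ℝ) ^ (-(M:ℤ)) ≤ X
        · rw [if_pos h0] at ih
          rw [hdouble] at ih
          linarith
        · have hz : ∀ ℓ ∈ Finset.Icc 1 M,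
              (if (2:ℝ) ^ (-(ℓ:ℤ)) ≤ X then (2:ℝ) ^ (-(ℓ:ℤ)) else 0) = 0 := by
            intro ℓ hℓ
            rw [if_neg]
            intro hc
            apply h0
            refine le_trans ?_ hc
            apply zpow_le_zpow_right₀ (by norm_num : (1:ℝ) ≤ 2)
            have := (Finset.mem_Icc.1 hℓ).2
            omega
          rw [Finset.sum_eq_zero hz]
          rw [hdouble] at h0
          push_neg at h0
          linarith
      · rw [if_neg h1]
        have h2 : (0:ℝ) ≤ (if (2:ℝ) ^ (-(M:ℤ)) ≤ X then (2:ℝ) ^ (-(M:ℤ)) else 0) := by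
          split
          · positivity
          · exact le_refl 0
        linarith [ih]
  have h2 : (0:ℝ) ≤ (if (2:ℝ) ^ (-(L:ℤ)) ≤ X then (2:ℝ) ^ (-(L:ℤ)) else 0) := by
    split
    · positivity
    · exact le_refl 0
  linarith [key L]


/-- The `(k,z)`-clustering cost of a multiset `P` of points of `ℝ^d` with respect to a
set `C` of centers: `cost_z(P, C) = ∑_{p∈P} dist(p, C)^z`. -/
noncomputable def clusterCost {d : ℕ} (z : ℕ)
    (P : Multiset (EuclideanSpace ℝ (Fin d)))
    (C : Set (EuclideanSpace ℝ (Fin d))) : ℝ :=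
  (P.map (fun p => Metric.infDist p C ^ z)).sum

/-- The value of the closed ball `B(x, r)` with respect to the multiset `P`:
`val(B(x, r)) = ∑_{p∈P, dist(p,x) ≤ r} (r − dist(p, x))^z`. -/
noncomputable def ballVal {d : ℕ} (z : ℕ)
    (P : Multiset (EuclideanSpace ℝ (Fin d)))
    (x : EuclideanSpace ℝ (Fin d)) (r : ℝ) : ℝ :=
  ((P.filter (fun p => dist p x ≤ r)).map (fun p => (r - dist p x) ^ z)).sum

set_option maxHeartbeats 1000000 in
/-- **Per-level greedy centers give an `O(1)`-approximation with additive error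
`O(kθ)`.** Fix integers `z, k, d ≥ 1` and reals `c_A ≥ 100`, `θ ≥ 1`.  Let `P` be a
finite multiset of `n ≥ 2` points of the closed unit ball of `ℝ^d` and set
`L = ⌈log₂ n⌉`.  For each level `ℓ ∈ {1,…,L}` let `N_ℓ ⊆ B(0,1)` be a finite set such
that every point of `B(0,1)` is within distance `2^{−ℓ}/2` of some point of `N_ℓ`, and
let `C_ℓ ⊆ N_ℓ` with `|C_ℓ| = 2k` be such that (1) distinct points of `C_ℓ` are at
distance greater than `3·2^{−ℓ}`, and (2) for every `c ∈ C_ℓ` and every `y ∈ N_ℓ` with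
`dist(y, C_ℓ) ≥ c_A·2^{−ℓ}` one has `val(B(c, 2^{−ℓ})) ≥ val(B(y, 2^{−ℓ})) − θ`.  Set
`C = ∪_{ℓ=1}^L C_ℓ`.  Then there is a constant `K` depending only on `z` and `c_A` such
that for every `Γ ⊆ B(0,1)` with `|Γ| = k`,
`cost_z(P, C) ≤ K·cost_z(P, Γ) + K·k·θ`. -/
theorem per_level_greedy_approximation
    (z : ℕ) (hz : 1 ≤ z) (cA : ℝ) (hcA : 100 ≤ cA) :
    ∃ K : ℝ,
      ∀ (d k : ℕ), 1 ≤ d → 1 ≤ k →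
      ∀ θ : ℝ, 1 ≤ θ →
      ∀ P : Multiset (EuclideanSpace ℝ (Fin d)),
        2 ≤ P.card →
        (∀ p ∈ P, p ∈ Metric.closedBall (0 : EuclideanSpace ℝ (Fin d)) 1) →
      ∀ N C : ℕ → Finset (EuclideanSpace ℝ (Fin d)),
        (∀ ℓ, 1 ≤ ℓ → ℓ ≤ Nat.clog 2 P.card →
          (↑(N ℓ) ⊆ Metric.closedBall (0 : EuclideanSpace ℝ (Fin d)) 1) ∧
          (∀ x ∈ Metric.closedBall (0 : EuclideanSpace ℝ (Fin d)) 1,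
            ∃ y ∈ N ℓ, dist x y ≤ (2 : ℝ) ^ (-(ℓ : ℤ)) / 2)) →
        (∀ ℓ, 1 ≤ ℓ → ℓ ≤ Nat.clog 2 P.card →
          C ℓ ⊆ N ℓ ∧
          (C ℓ).card = 2 * k ∧
          (∀ c ∈ C ℓ, ∀ c' ∈ C ℓ, c ≠ c' →
            3 * (2 : ℝ) ^ (-(ℓ : ℤ)) < dist c c') ∧
          (∀ c ∈ C ℓ, ∀ y ∈ N ℓ,
            cA * (2 : ℝ) ^ (-(ℓ : ℤ)) ≤ Metric.infDist y (↑(C ℓ) : Set _) →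
            ballVal z P y ((2 : ℝ) ^ (-(ℓ : ℤ))) - θ
              ≤ ballVal z P c ((2 : ℝ) ^ (-(ℓ : ℤ))))) →
      ∀ Γ : Finset (EuclideanSpace ℝ (Fin d)),
        (↑Γ ⊆ Metric.closedBall (0 : EuclideanSpace ℝ (Fin d)) 1) →
        Γ.card = k →
        clusterCost z P (⋃ ℓ ∈ Finset.Icc 1 (Nat.clog 2 P.card), (↑(C ℓ) : Set _))
          ≤ K * clusterCost z P (↑Γ : Set _) + K * k * θ := by
  refine ⟨2^z*(16*cA+32)^z + 2^z*(cA+2)^z + (16*cA)^z*2^(z+1) + (16*cA)^z, ?_⟩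
  intro d k hd hk θ hθ P hn hPball N C hNh hCh Γ hΓball hΓcard
  classical
  set L := Nat.clog 2 (Multiset.card P) with hLdef
  set r : ℕ → ℝ := fun ℓ => (2:ℝ) ^ (-(ℓ:ℤ)) with hrdef
  have hrr : ∀ ℓ : ℕ, (2:ℝ) ^ (-(ℓ:ℤ)) = r ℓ := fun ℓ => rfl
  simp only [hrr] at hNh hCh
  set Cu : Set (EuclideanSpace ℝ (Fin d)) := ⋃ ℓ ∈ Finset.Icc 1 L, (↑(C ℓ) : Set (EuclideanSpace ℝ (Fin d))) with hCudef
  -- basic facts about r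
  have hrpos : ∀ ℓ, 0 < r ℓ := fun ℓ => zpow_pos (by norm_num) _
  have hrmono : ∀ {a b : ℕ}, a ≤ b → r b ≤ r a := by
    intro a b hab
    exact zpow_le_zpow_right₀ (by norm_num) (by omega : -(b:ℤ) ≤ -(a:ℤ))
  have hr1 : r 1 = 1/2 := by
    simp only [hrdef]
    norm_num
  have hrdouble : ∀ m : ℕ, 1 ≤ m → r (m-1) = 2 * r m := by
    intro m hm
    have hcast : -(((m-1:ℕ)):ℤ) = -(m:ℤ) + 1 := by
      have : ((m-1:ℕ):ℤ) = (m:ℤ) - 1 := by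
        push_cast [Nat.cast_sub hm]
        ring
      omega
    simp only [hrdef, hcast, zpow_add₀ (by norm_num : (2:ℝ) ≠ 0)]
    ring
  have hr0eq : r 0 = 1 := by simp [hrdef]
  have hL1 : 1 ≤ L := Nat.clog_pos (by norm_num) hn
  have hnpow : (P.card : ℝ) * r L ≤ 1 := by
    have h1 : (P.card : ℝ) ≤ 2 ^ L := by
      have h := Nat.le_pow_clog (b := 2) (by norm_num) (Multiset.card P)
      rw [← hLdef] at h
      exact_mod_cast h
    have h2 : (0:ℝ) < r L := hrpos L
    have h3 : (2:ℝ) ^ L * r L = 1 := by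
      simp only [hrdef]
      rw [← zpow_natCast (2:ℝ) L, ← zpow_add₀ (by norm_num : (2:ℝ) ≠ 0)]
      simp
    nlinarith
  clear_value r
  -- Γ facts
  have hΓne : Γ.Nonempty := Finset.card_pos.1 (by omega)
  have hΓsetne : (↑Γ : Set (EuclideanSpace ℝ (Fin d))).Nonempty := by
    obtain ⟨γ, hγ⟩ := hΓne
    exact ⟨γ, by exact_mod_cast hγ⟩
  set D : EuclideanSpace ℝ (Fin d) → ℝ := fun p => Metric.infDist p (↑Γ : Set (EuclideanSpace ℝ (Fin d))) with hDdef
  have hcostΓrw : clusterCost z P (↑Γ : Set (EuclideanSpace ℝ (Fin d)))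
      = (P.map (fun p => D p ^ z)).sum := rfl
  have hDnonneg : ∀ p, 0 ≤ D p := fun p => Metric.infDist_nonneg
  have hDle : ∀ (p : EuclideanSpace ℝ (Fin d)), ∀ γ ∈ Γ, D p ≤ dist p γ := by
    intro p γ hγ
    exact Metric.infDist_le_dist_of_mem (by exact_mod_cast hγ)
  have hDlt : ∀ (p : EuclideanSpace ℝ (Fin d)) (b : ℝ), D p < b → ∃ γ ∈ Γ, dist p γ < b := by
    intro p b hb
    obtain ⟨γ, hγ, hd⟩ := (Metric.infDist_lt_iff hΓsetne).1 hb
    exact ⟨γ, by exact_mod_cast hγ, hd⟩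
  -- nearest point of Γ
  have exists_nearest : ∀ p : EuclideanSpace ℝ (Fin d), ∃ γ ∈ Γ, ∀ γ' ∈ Γ, dist p γ ≤ dist p γ' :=
    fun p => Γ.exists_min_image (fun c => dist p c) hΓne
  set γp : EuclideanSpace ℝ (Fin d) → EuclideanSpace ℝ (Fin d) := fun p => (exists_nearest p).choose with hγpdef
  have hγpmem : ∀ p, γp p ∈ Γ := fun p => (exists_nearest p).choose_spec.1
  have hγpmin : ∀ p, ∀ γ' ∈ Γ, dist p (γp p) ≤ dist p γ' :=
    fun p => (exists_nearest p).choose_spec.2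
  have hγpD : ∀ p, dist p (γp p) = D p := by
    intro p
    refine le_antisymm ?_ (hDle p _ (hγpmem p))
    by_contra hlt
    push_neg at hlt
    obtain ⟨γ, hγ, hd⟩ := hDlt p _ hlt
    exact absurd (hγpmin p γ hγ) (not_le.2 hd)
  clear_value D γp
  -- diameter
  have hdiam : ∀ a b : EuclideanSpace ℝ (Fin d), a ∈ Metric.closedBall (0:EuclideanSpace ℝ (Fin d)) 1 → b ∈ Metric.closedBall (0:EuclideanSpace ℝ (Fin d)) 1 →
      dist a b ≤ 2 := by
    intro a b ha hb
    have h1 : dist a 0 ≤ 1 := Metric.mem_closedBall.1 ha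
    have h2 : dist b 0 ≤ 1 := Metric.mem_closedBall.1 hb
    calc dist a b ≤ dist a 0 + dist 0 b := dist_triangle _ _ _
    _ = dist a 0 + dist b 0 := by rw [dist_comm (0:EuclideanSpace ℝ (Fin d)) b]
    _ ≤ 2 := by linarith
  -- level data
  have hNball : ∀ ℓ, 1 ≤ ℓ → ℓ ≤ L → (↑(N ℓ) : Set (EuclideanSpace ℝ (Fin d))) ⊆ Metric.closedBall 0 1 :=
    fun ℓ h1 h2 => (hNh ℓ h1 h2).1
  have hNcov : ∀ ℓ, 1 ≤ ℓ → ℓ ≤ L → ∀ x ∈ Metric.closedBall (0:EuclideanSpace ℝ (Fin d)) 1,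
      ∃ y ∈ N ℓ, dist x y ≤ r ℓ / 2 := fun ℓ h1 h2 => (hNh ℓ h1 h2).2
  have hCsub : ∀ ℓ, 1 ≤ ℓ → ℓ ≤ L → C ℓ ⊆ N ℓ := fun ℓ h1 h2 => (hCh ℓ h1 h2).1
  have hCcard : ∀ ℓ, 1 ≤ ℓ → ℓ ≤ L → (C ℓ).card = 2 * k := fun ℓ h1 h2 => (hCh ℓ h1 h2).2.1
  have hCsep : ∀ ℓ, 1 ≤ ℓ → ℓ ≤ L → ∀ c ∈ C ℓ, ∀ c' ∈ C ℓ, c ≠ c' →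
      3 * r ℓ < dist c c' := fun ℓ h1 h2 => (hCh ℓ h1 h2).2.2.1
  have hCval : ∀ ℓ, 1 ≤ ℓ → ℓ ≤ L → ∀ c ∈ C ℓ, ∀ y ∈ N ℓ,
      cA * r ℓ ≤ Metric.infDist y (↑(C ℓ) : Set (EuclideanSpace ℝ (Fin d))) →
      ballVal z P y (r ℓ) - θ ≤ ballVal z P c (r ℓ) := fun ℓ h1 h2 => (hCh ℓ h1 h2).2.2.2
  have hCne : ∀ ℓ, 1 ≤ ℓ → ℓ ≤ L → (C ℓ).Nonempty := by
    intro ℓ h1 h2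
    apply Finset.card_pos.1
    rw [hCcard ℓ h1 h2]
    omega
  have hCuC : ∀ ℓ, 1 ≤ ℓ → ℓ ≤ L → ∀ c ∈ C ℓ, c ∈ Cu := by
    intro ℓ h1 h2 c hc
    exact Set.mem_biUnion (Finset.mem_Icc.2 ⟨h1, h2⟩) (by exact_mod_cast hc)
  have hCball : ∀ ℓ, 1 ≤ ℓ → ℓ ≤ L → ∀ c ∈ C ℓ, c ∈ Metric.closedBall (0:EuclideanSpace ℝ (Fin d)) 1 := by
    intro ℓ h1 h2 c hc
    exact hNball ℓ h1 h2 (by exact_mod_cast (hCsub ℓ h1 h2 hc))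
  have hCu2 : ∀ p ∈ P, Metric.infDist p Cu ≤ 2 := by
    intro p hp
    obtain ⟨c, hc⟩ := hCne 1 le_rfl hL1
    calc Metric.infDist p Cu ≤ dist p c := Metric.infDist_le_dist_of_mem (hCuC 1 le_rfl hL1 c hc)
    _ ≤ 2 := hdiam p c (hPball p hp) (hCball 1 le_rfl hL1 c hc)
  clear hNh hCh
  clear_value Cu
  -- net point near each center of Γ
  set yf : ℕ → EuclideanSpace ℝ (Fin d) → EuclideanSpace ℝ (Fin d) := fun ℓ γ =>
    if h : ∃ y ∈ N ℓ, dist γ y ≤ r ℓ / 2 then h.choose else γ with hyfdef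
  have hyf : ∀ ℓ, 1 ≤ ℓ → ℓ ≤ L → ∀ γ ∈ Γ, yf ℓ γ ∈ N ℓ ∧ dist γ (yf ℓ γ) ≤ r ℓ / 2 := by
    intro ℓ h1 h2 γ hγ
    have hex : ∃ y ∈ N ℓ, dist γ y ≤ r ℓ / 2 :=
      hNcov ℓ h1 h2 γ (hΓball (by exact_mod_cast hγ))
    simp only [hyfdef, dif_pos hex]
    exact ⟨hex.choose_spec.1, hex.choose_spec.2⟩
  set caseB : ℕ → EuclideanSpace ℝ (Fin d) → Prop := fun ℓ γ =>
    cA * r ℓ ≤ Metric.infDist (yf ℓ γ) (↑(C ℓ) : Set (EuclideanSpace ℝ (Fin d))) with hcaseBdef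
  have hcaseB_iff : ∀ ℓ γ, caseB ℓ γ ↔
      cA * r ℓ ≤ Metric.infDist (yf ℓ γ) (↑(C ℓ) : Set (EuclideanSpace ℝ (Fin d))) :=
    fun ℓ γ => Iff.rfl
  clear_value yf caseB
  -- case A bound
  have H3 : ∀ ℓ, 1 ≤ ℓ → ℓ ≤ L → ∀ γ ∈ Γ, ¬ caseB ℓ γ → ∀ p : EuclideanSpace ℝ (Fin d),
      Metric.infDist p Cu ≤ dist p γ + (cA + 1) * r ℓ := by
    intro ℓ h1 h2 γ hγ hB p
    obtain ⟨hyN, hyd⟩ := hyf ℓ h1 h2 γ hγ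
    rw [hcaseB_iff] at hB
    have hlt : Metric.infDist (yf ℓ γ) (↑(C ℓ) : Set (EuclideanSpace ℝ (Fin d))) < cA * r ℓ := not_le.1 hB
    have hCsetne : (↑(C ℓ) : Set (EuclideanSpace ℝ (Fin d))).Nonempty := by
      obtain ⟨c, hc⟩ := hCne ℓ h1 h2
      exact ⟨c, by exact_mod_cast hc⟩
    obtain ⟨c, hc, hcd⟩ := (Metric.infDist_lt_iff hCsetne).1 hlt
    have hcC : c ∈ C ℓ := by exact_mod_cast hc
    have h5 : Metric.infDist p Cu ≤ dist p c :=
      Metric.infDist_le_dist_of_mem (hCuC ℓ h1 h2 c hcC)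
    have h6 : dist p c ≤ dist p γ + dist γ (yf ℓ γ) + dist (yf ℓ γ) c := by
      calc dist p c ≤ dist p (yf ℓ γ) + dist (yf ℓ γ) c := dist_triangle _ _ _
      _ ≤ (dist p γ + dist γ (yf ℓ γ)) + dist (yf ℓ γ) c := by
          linarith [dist_triangle p γ (yf ℓ γ)]
    have hr0 := hrpos ℓ
    linarith
  -- case B machinery
  set isB : EuclideanSpace ℝ (Fin d) → Prop := fun p =>
    ∃ ℓ, (1 ≤ ℓ ∧ ℓ ≤ L) ∧ caseB ℓ (γp p) ∧ D p < r ℓ / 8 with hisBdef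
  have hisB_iff : ∀ p, isB p ↔
      ∃ ℓ, (1 ≤ ℓ ∧ ℓ ≤ L) ∧ caseB ℓ (γp p) ∧ D p < r ℓ / 8 := fun p => Iff.rfl
  clear_value isB
  set mB : EuclideanSpace ℝ (Fin d) → ℕ := fun γ =>
    sInf {ℓ | (1 ≤ ℓ ∧ ℓ ≤ L) ∧ caseB ℓ γ} with hmBdef
  have HB1 : ∀ p : EuclideanSpace ℝ (Fin d), isB p →
      (1 ≤ mB (γp p) ∧ mB (γp p) ≤ L) ∧ caseB (mB (γp p)) (γp p) ∧
        D p < r (mB (γp p)) / 8 := by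
    intro p hp
    obtain ⟨ℓ0, hrange, hBc, hD⟩ := (hisB_iff p).1 hp
    have hne : {ℓ | (1 ≤ ℓ ∧ ℓ ≤ L) ∧ caseB ℓ (γp p)}.Nonempty := ⟨ℓ0, hrange, hBc⟩
    have hmem : mB (γp p) ∈ {ℓ | (1 ≤ ℓ ∧ ℓ ≤ L) ∧ caseB ℓ (γp p)} := Nat.sInf_mem hne
    have hle : mB (γp p) ≤ ℓ0 := Nat.sInf_le ⟨hrange, hBc⟩
    have hrm : r ℓ0 ≤ r (mB (γp p)) := hrmono hle
    exact ⟨hmem.1, hmem.2, by linarith⟩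
  have HBmin : ∀ (γ : EuclideanSpace ℝ (Fin d)) (j : ℕ), j < mB γ →
      ¬((1 ≤ j ∧ j ≤ L) ∧ caseB j γ) := fun γ j hj => Nat.notMem_of_lt_sInf hj
  clear_value mB
  have HB2 : ∀ p ∈ P, isB p → Metric.infDist p Cu ≤ 4 * cA * r (mB (γp p)) := by
    intro p hp hB
    obtain ⟨hrange, hcB, hD⟩ := HB1 p hB
    rcases eq_or_lt_of_le hrange.1 with h1 | h2
    · have hm1 : mB (γp p) = 1 := h1.symm
      have h2cA : 2 ≤ 4 * cA * r (mB (γp p)) := by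
        rw [hm1, hr1]; nlinarith
      exact le_trans (hCu2 p hp) h2cA
    · have hm2 : 2 ≤ mB (γp p) := h2
      have hnot : ¬ caseB (mB (γp p) - 1) (γp p) := by
        intro hc
        exact HBmin (γp p) (mB (γp p) - 1) (by omega)
          ⟨⟨by omega, by omega⟩, hc⟩
      have h3 := H3 (mB (γp p) - 1) (by omega) (by omega) (γp p) (hγpmem p) hnot p
      rw [hγpD p] at h3
      have hd2 : r (mB (γp p) - 1) = 2 * r (mB (γp p)) := hrdouble _ (by omega)
      rw [hd2] at h3
      have hr0 := hrpos (mB (γp p))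
      nlinarith [mul_le_mul_of_nonneg_right (by linarith : (17/8:ℝ) ≤ 2*cA) (le_of_lt hr0)]
  have HB3 : ∀ p : EuclideanSpace ℝ (Fin d), isB p →
      dist p (yf (mB (γp p)) (γp p)) ≤ 5/8 * r (mB (γp p)) := by
    intro p hB
    obtain ⟨hrange, hcB, hD⟩ := HB1 p hB
    obtain ⟨hyN, hyd⟩ := hyf _ hrange.1 hrange.2 (γp p) (hγpmem p)
    calc dist p (yf (mB (γp p)) (γp p))
        ≤ dist p (γp p) + dist (γp p) (yf (mB (γp p)) (γp p)) := dist_triangle _ _ _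
    _ ≤ D p + r (mB (γp p)) / 2 := by rw [hγpD]; linarith
    _ ≤ 5/8 * r (mB (γp p)) := by linarith
  -- far centers
  set Far : ℕ → Finset (EuclideanSpace ℝ (Fin d)) := fun ℓ =>
    (C ℓ).filter (fun c => ∀ γ ∈ Γ, 3/2 * r ℓ < dist c γ) with hFardef
  have hFarsub : ∀ ℓ, Far ℓ ⊆ C ℓ := fun ℓ => Finset.filter_subset _ _
  have hFarprop : ∀ ℓ, ∀ c ∈ Far ℓ, ∀ γ ∈ Γ, 3/2 * r ℓ < dist c γ :=
    fun ℓ c hc => (Finset.mem_filter.1 hc).2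
  have hFarcard : ∀ ℓ, 1 ≤ ℓ → ℓ ≤ L → k ≤ (Far ℓ).card := by
    intro ℓ h1 h2
    have hsplit : (Far ℓ).card +
        ((C ℓ).filter (fun c => ¬ ∀ γ ∈ Γ, 3/2 * r ℓ < dist c γ)).card = (C ℓ).card := by
      simp only [hFardef]
      exact Finset.card_filter_add_card_filter_not
        (p := fun c => ∀ γ ∈ Γ, 3/2 * r ℓ < dist c γ)
    have hNearle : ((C ℓ).filter (fun c => ¬ ∀ γ ∈ Γ, 3/2 * r ℓ < dist c γ)).card ≤ k := by
      set Near := (C ℓ).filter (fun c => ¬ ∀ γ ∈ Γ, 3/2 * r ℓ < dist c γ) with hNeardef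
      have hNearsub : Near ⊆ C ℓ := Finset.filter_subset _ _
      have hex : ∀ c ∈ Near, ∃ γ ∈ Γ, dist c γ ≤ 3/2 * r ℓ := by
        intro c hc
        have h := (Finset.mem_filter.1 hc).2
        push_neg at h
        obtain ⟨γ, hγ, hd⟩ := h
        exact ⟨γ, hγ, hd⟩
      have htotal : ∀ c : EuclideanSpace ℝ (Fin d),
          ∃ γ, c ∈ Near → (γ ∈ Γ ∧ dist c γ ≤ 3/2 * r ℓ) := by
        intro c
        by_cases hc : c ∈ Near
        · obtain ⟨γ, hγ, hd⟩ := hex c hc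
          exact ⟨γ, fun _ => ⟨hγ, hd⟩⟩
        · exact ⟨hΓne.choose, fun h => absurd h hc⟩
      choose g hg using htotal
      have hinj : Set.InjOn g ↑Near := by
        intro a ha b hb hab
        have haN : a ∈ Near := ha
        have hbN : b ∈ Near := hb
        by_contra hne
        have h3r := hCsep ℓ h1 h2 a (hNearsub haN) b (hNearsub hbN) hne
        have d1 := (hg a haN).2
        have d2 := (hg b hbN).2
        have htr : dist a b ≤ dist a (g a) + dist (g b) b := by
          rw [hab]
          calc dist a b ≤ dist a (g b) + dist (g b) b := dist_triangle _ _ _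
          _ = dist a (g b) + dist (g b) b := rfl
        rw [dist_comm (g b) b] at htr
        have hr0 := hrpos ℓ
        linarith
      have hcard := Finset.card_le_card_of_injOn g (fun c hc => (hg c hc).1) hinj
      rw [hΓcard] at hcard
      exact hcard
    have hC2k := hCcard ℓ h1 h2
    omega
  have hFarne : ∀ ℓ, 1 ≤ ℓ → ℓ ≤ L → (Far ℓ).Nonempty := by
    intro ℓ h1 h2
    apply Finset.card_pos.1
    have := hFarcard ℓ h1 h2
    omega
  clear_value Far
  -- minimizing far center per level
  set cm : ℕ → EuclideanSpace ℝ (Fin d) := fun ℓ =>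
    if h : (Far ℓ).Nonempty then
      (Finset.exists_min_image (Far ℓ) (fun c => ballVal z P c (r ℓ)) h).choose
    else Classical.arbitrary _ with hcmdef
  have hcm : ∀ ℓ, 1 ≤ ℓ → ℓ ≤ L → cm ℓ ∈ Far ℓ ∧
      ∀ c ∈ Far ℓ, ballVal z P (cm ℓ) (r ℓ) ≤ ballVal z P c (r ℓ) := by
    intro ℓ h1 h2
    have h := hFarne ℓ h1 h2
    have hspec := (Finset.exists_min_image (Far ℓ) (fun c => ballVal z P c (r ℓ)) h).choose_spec
    simp only [hcmdef, dif_pos h]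
    exact ⟨hspec.1, hspec.2⟩
  clear_value cm
  have hval0 : ∀ (x : EuclideanSpace ℝ (Fin d)) (s : ℝ), 0 ≤ ballVal z P x s := by
    intro x s
    apply msum_nonneg
    intro a ha
    have hd := (Multiset.mem_filter.1 ha).2
    have : 0 ≤ s - dist a x := by linarith
    positivity
  set G : ℕ → ℝ := fun ℓ =>
    if 1 ≤ ℓ ∧ ℓ ≤ L then ballVal z P (cm ℓ) (r ℓ) else 0 with hGdef
  have hG0 : ∀ ℓ, 0 ≤ G ℓ := by
    intro ℓ
    simp only [hGdef]
    split
    · exact hval0 _ _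
    · exact le_refl 0
  clear_value G
  have hcostΓ0 : 0 ≤ clusterCost z P (↑Γ : Set (EuclideanSpace ℝ (Fin d))) := by
    rw [hcostΓrw]
    exact msum_nonneg _ _ (fun p _ => pow_nonneg (hDnonneg p) z)
  have hkθ : (1:ℝ) ≤ (k:ℝ) * θ := by
    have h1 : (1:ℝ) ≤ (k:ℝ) := by exact_mod_cast hk
    have h2 := mul_le_mul h1 hθ zero_le_one (le_trans zero_le_one h1)
    rw [one_mul] at h2
    exact h2
  -- case A pointwise bound
  have hApt : ∀ p ∈ P, ¬ isB p →
      Metric.infDist p Cu ≤ (16*cA+32) * D p + (cA+2) * r L := by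
    intro p hp hnB
    set T := (Finset.Icc 1 L).filter (fun ℓ => D p < r ℓ / 8) with hTdef
    have hTmem : ∀ ℓ' : ℕ, ℓ' ∈ T ↔ (ℓ' ∈ Finset.Icc 1 L ∧ D p < r ℓ' / 8) :=
      fun ℓ' => Finset.mem_filter
    clear_value T
    by_cases hT : T.Nonempty
    · set ℓs := T.max' hT with hℓsdef
      have hℓsT : ℓs ∈ T := T.max'_mem hT
      have hℓsIcc := ((hTmem ℓs).1 hℓsT).1
      obtain ⟨h1, h2⟩ := Finset.mem_Icc.1 hℓsIcc
      have hℓsD : D p < r ℓs / 8 := ((hTmem ℓs).1 hℓsT).2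
      clear_value ℓs
      have hnotB : ¬ caseB ℓs (γp p) := by
        intro hB
        exact hnB ((hisB_iff p).2 ⟨ℓs, ⟨h1, h2⟩, hB, hℓsD⟩)
      have h3 := H3 ℓs h1 h2 (γp p) (hγpmem p) hnotB p
      rw [hγpD p] at h3
      rcases eq_or_lt_of_le h2 with hL | hLlt
      · have hrle : r L = r ℓs := by rw [hL]
        have h0 := hDnonneg p
        have hr0 := hrpos L
        have e1 : (cA+1) * r ℓs ≤ (cA+2) * r L := by
          rw [hrle]
          have := mul_le_mul_of_nonneg_right (by linarith : cA+1 ≤ cA+2) (le_of_lt (hrpos ℓs))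
          linarith
        have e2 : D p ≤ (16*cA+32) * D p := le_mul_of_one_le_left h0 (by linarith)
        linarith
      · have hnext : ℓs + 1 ∉ T := by
          intro hmem
          have := T.le_max' _ hmem
          omega
        have hnextIcc : ℓs + 1 ∈ Finset.Icc 1 L := Finset.mem_Icc.2 ⟨by omega, by omega⟩
        have hnextD : ¬ (D p < r (ℓs+1) / 8) := by
          intro hc
          exact hnext ((hTmem _).2 ⟨hnextIcc, hc⟩)
        push_neg at hnextD
        have hdd : r ℓs = 2 * r (ℓs + 1) := by
          have := hrdouble (ℓs+1) (by omega)
          simpa using this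
        have h0 := hDnonneg p
        have hr0 := hrpos L
        have e2 : r ℓs ≤ 16 * D p := by linarith
        have e3 : (cA+1) * r ℓs ≤ (cA+1) * (16 * D p) :=
          mul_le_mul_of_nonneg_left e2 (by linarith)
        have e4 : (0:ℝ) ≤ (cA+2) * r L := mul_nonneg (by linarith) (le_of_lt hr0)
        nlinarith [e3, e4, h3]
    · have h1notT : (1:ℕ) ∉ T := by
        intro h
        exact hT ⟨1, h⟩
      have h1Icc : (1:ℕ) ∈ Finset.Icc 1 L := Finset.mem_Icc.2 ⟨le_rfl, hL1⟩
      have hD1 : ¬ (D p < r 1 / 8) := by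
        intro hc
        exact h1notT ((hTmem 1).2 ⟨h1Icc, hc⟩)
      push_neg at hD1
      rw [hr1] at hD1
      have h2 := hCu2 p hp
      have hr0 := hrpos L
      have e4 : (0:ℝ) ≤ (cA+2) * r L := mul_nonneg (by linarith) (le_of_lt hr0)
      have e5 : (0:ℝ) ≤ 16*cA * D p := mul_nonneg (by linarith) (hDnonneg p)
      nlinarith [e4, e5]
  -- case A sum bound
  have hA : ((P.filter (fun p => ¬ isB p)).map (fun p => Metric.infDist p Cu ^ z)).sum
      ≤ 2^z*(16*cA+32)^z * clusterCost z P (↑Γ : Set (EuclideanSpace ℝ (Fin d)))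
        + 2^z*(cA+2)^z * ((k:ℝ)*θ) := by
    have hpt2 : ∀ p ∈ P.filter (fun p => ¬ isB p),
        Metric.infDist p Cu ^ z
          ≤ 2^z*(16*cA+32)^z * D p ^ z + 2^z*(cA+2)^z * r L ^ z := by
      intro p hp
      have hpP := Multiset.mem_filter.1 hp
      have h1 := hApt p hpP.1 hpP.2
      have ha0 : (0:ℝ) ≤ (16*cA+32) * D p := mul_nonneg (by linarith) (hDnonneg p)
      have hb0 : (0:ℝ) ≤ (cA+2) * r L := mul_nonneg (by linarith) (le_of_lt (hrpos L))
      have h2 : Metric.infDist p Cu ^ z ≤ ((16*cA+32) * D p + (cA+2) * r L)^z :=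
        pow_le_pow_left₀ Metric.infDist_nonneg h1 z
      have h3 := pow_add_le_aux z _ _ ha0 hb0
      rw [mul_pow, mul_pow] at h3
      calc Metric.infDist p Cu ^ z ≤ ((16*cA+32) * D p + (cA+2) * r L)^z := h2
      _ ≤ 2^z * ((16*cA+32)^z * D p ^ z) + 2^z * ((cA+2)^z * r L ^ z) := h3
      _ = 2^z*(16*cA+32)^z * D p ^ z + 2^z*(cA+2)^z * r L ^ z := by ring
    have hs1 : ((P.filter (fun p => ¬ isB p)).map (fun p => Metric.infDist p Cu ^ z)).sum
        ≤ ((P.filter (fun p => ¬ isB p)).map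
            (fun p => 2^z*(16*cA+32)^z * D p ^ z + 2^z*(cA+2)^z * r L ^ z)).sum :=
      msum_le _ _ _ hpt2
    have hs2 : ((P.filter (fun p => ¬ isB p)).map
          (fun p => 2^z*(16*cA+32)^z * D p ^ z + 2^z*(cA+2)^z * r L ^ z)).sum
        = 2^z*(16*cA+32)^z * ((P.filter (fun p => ¬ isB p)).map (fun p => D p ^ z)).sum
          + 2^z*(cA+2)^z * r L ^ z * (Multiset.card (P.filter (fun p => ¬ isB p)) : ℝ) := by
      rw [Multiset.sum_map_add]
      congr 1
      · exact Multiset.sum_map_mul_left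
      · rw [Multiset.map_const', Multiset.sum_replicate, nsmul_eq_mul]
        ring
    have hs3 : ((P.filter (fun p => ¬ isB p)).map (fun p => D p ^ z)).sum
        ≤ clusterCost z P (↑Γ : Set (EuclideanSpace ℝ (Fin d))) := by
      rw [hcostΓrw]
      exact msum_mono_of_le (Multiset.filter_le _ _) _
        (fun p _ => pow_nonneg (hDnonneg p) z)
    have hs4 : r L ^ z * (Multiset.card (P.filter (fun p => ¬ isB p)) : ℝ) ≤ (k:ℝ) * θ := by
      have hc1 : (Multiset.card (P.filter (fun p => ¬ isB p)) : ℝ) ≤ (Multiset.card P : ℝ) := by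
        exact_mod_cast Multiset.card_le_card (Multiset.filter_le _ _)
      have hc0 : (0:ℝ) ≤ (Multiset.card (P.filter (fun p => ¬ isB p)) : ℝ) := by positivity
      have hrz : r L ^ z ≤ r L := by
        have hrL1 : r L ≤ 1 := by
          have := hrmono (Nat.zero_le L)
          linarith [hr0eq]
        calc r L ^ z ≤ r L ^ 1 :=
          pow_le_pow_of_le_one (le_of_lt (hrpos L)) hrL1 hz
        _ = r L := pow_one _
      have hr0 := hrpos L
      calc r L ^ z * (Multiset.card (P.filter (fun p => ¬ isB p)) : ℝ)
          ≤ r L * (Multiset.card P : ℝ) := mul_le_mul hrz hc1 hc0 (le_of_lt hr0)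
      _ ≤ 1 := by rw [mul_comm]; exact hnpow
      _ ≤ (k:ℝ) * θ := hkθ
    have hcoef1 : (0:ℝ) ≤ 2^z*(16*cA+32)^z := by positivity
    have hcoef2 : (0:ℝ) ≤ 2^z*(cA+2)^z := by
      have : (0:ℝ) < cA + 2 := by linarith
      positivity
    calc ((P.filter (fun p => ¬ isB p)).map (fun p => Metric.infDist p Cu ^ z)).sum
        ≤ _ := hs1
    _ = _ := hs2
    _ ≤ 2^z*(16*cA+32)^z * clusterCost z P (↑Γ : Set (EuclideanSpace ℝ (Fin d)))
          + 2^z*(cA+2)^z * ((k:ℝ)*θ) := by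
        have t1 := mul_le_mul_of_nonneg_left hs3 hcoef1
        have t2 := mul_le_mul_of_nonneg_left hs4 hcoef2
        linarith [t1, t2]
  -- case B sum bound
  have hB : ((P.filter isB).map (fun p => Metric.infDist p Cu ^ z)).sum
      ≤ (16*cA)^z*2^(z+1) * clusterCost z P (↑Γ : Set (EuclideanSpace ℝ (Fin d)))
        + (16*cA)^z * ((k:ℝ)*θ) := by
    have h16cA : (0:ℝ) ≤ (16*cA)^z := by positivity
    -- fiber decomposition
    rw [msum_fiber γp Γ (fun p => Metric.infDist p Cu ^ z) (P.filter isB)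
      (fun p _ => hγpmem p)]
    -- per-fiber bound
    have hfiber : ∀ γ ∈ Γ,
        (((P.filter isB).filter (fun p => γp p = γ)).map
          (fun p => Metric.infDist p Cu ^ z)).sum ≤ (16*cA)^z * (G (mB γ) + θ) := by
      intro γ hγ
      by_cases hQe : (P.filter isB).filter (fun p => γp p = γ) = 0
      · rw [hQe]
        simp only [Multiset.map_zero, Multiset.sum_zero]
        have := hG0 (mB γ)
        have h1 : (0:ℝ) ≤ G (mB γ) + θ := by linarith
        positivity
      · obtain ⟨p0, hp0⟩ := Multiset.exists_mem_of_ne_zero hQe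
        have hp0' := Multiset.mem_filter.1 hp0
        have hp0P := Multiset.mem_filter.1 hp0'.1
        have hγeq : γp p0 = γ := hp0'.2
        have hBp0 : isB p0 := hp0P.2
        have hr01 := HB1 p0 hBp0
        rw [hγeq] at hr01
        obtain ⟨hrange, hcB, _⟩ := hr01
        have hyp := hyf (mB γ) hrange.1 hrange.2 γ hγ
        -- pointwise bound on the fiber
        have hptQ : ∀ p ∈ (P.filter isB).filter (fun p => γp p = γ),
            Metric.infDist p Cu ^ z
              ≤ (16*cA)^z * (r (mB γ) - dist p (yf (mB γ) γ))^z := by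
          intro p hp
          have hp' := Multiset.mem_filter.1 hp
          have hpP' := Multiset.mem_filter.1 hp'.1
          have hBp : isB p := hpP'.2
          have hγp2 : γp p = γ := hp'.2
          have h1 := HB2 p hpP'.1 hBp
          have h2 := HB3 p hBp
          rw [hγp2] at h1 h2
          have hr0 := hrpos (mB γ)
          have hle : Metric.infDist p Cu ≤ 16*cA * (r (mB γ) - dist p (yf (mB γ) γ)) := by
            have e1 : (3/8:ℝ) * r (mB γ) ≤ r (mB γ) - dist p (yf (mB γ) γ) := by linarith
            have e2 := mul_le_mul_of_nonneg_left e1 (by linarith : (0:ℝ) ≤ 16*cA)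
            have e3 : (0:ℝ) ≤ cA * r (mB γ) := mul_nonneg (by linarith) (le_of_lt hr0)
            nlinarith [e2, e3, h1]
          calc Metric.infDist p Cu ^ z
              ≤ (16*cA * (r (mB γ) - dist p (yf (mB γ) γ)))^z :=
                pow_le_pow_left₀ Metric.infDist_nonneg hle z
          _ = (16*cA)^z * (r (mB γ) - dist p (yf (mB γ) γ))^z := mul_pow _ _ _
        -- sum over the fiber
        have hsum1 : (((P.filter isB).filter (fun p => γp p = γ)).map
              (fun p => Metric.infDist p Cu ^ z)).sum
            ≤ (16*cA)^z * (((P.filter isB).filter (fun p => γp p = γ)).map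
              (fun p => (r (mB γ) - dist p (yf (mB γ) γ))^z)).sum := by
          calc (((P.filter isB).filter (fun p => γp p = γ)).map
              (fun p => Metric.infDist p Cu ^ z)).sum
              ≤ (((P.filter isB).filter (fun p => γp p = γ)).map
                (fun p => (16*cA)^z * (r (mB γ) - dist p (yf (mB γ) γ))^z)).sum :=
                msum_le _ _ _ hptQ
          _ = _ := Multiset.sum_map_mul_left
        have hQle : (P.filter isB).filter (fun p => γp p = γ)
            ≤ P.filter (fun q => dist q (yf (mB γ) γ) ≤ r (mB γ)) := by
          rw [Multiset.le_filter]
          constructor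
          · exact le_trans (Multiset.filter_le _ _) (Multiset.filter_le _ _)
          · intro a ha
            have ha' := Multiset.mem_filter.1 ha
            have haB : isB a := (Multiset.mem_filter.1 ha'.1).2
            have h2 := HB3 a haB
            rw [ha'.2] at h2
            have hr0 := hrpos (mB γ)
            linarith
        have hsum2 : (((P.filter isB).filter (fun p => γp p = γ)).map
              (fun p => (r (mB γ) - dist p (yf (mB γ) γ))^z)).sum
            ≤ ballVal z P (yf (mB γ) γ) (r (mB γ)) := by
          have := msum_mono_of_le hQle
            (fun p => (r (mB γ) - dist p (yf (mB γ) γ))^z)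
            (by
              intro a ha
              have hd := (Multiset.mem_filter.1 ha).2
              have : (0:ℝ) ≤ r (mB γ) - dist a (yf (mB γ) γ) := by linarith
              positivity)
          exact this
        have hsum3 : ballVal z P (yf (mB γ) γ) (r (mB γ)) ≤ G (mB γ) + θ := by
          have hcmspec := hcm (mB γ) hrange.1 hrange.2
          have hcmC : cm (mB γ) ∈ C (mB γ) := hFarsub _ hcmspec.1
          have hyN : yf (mB γ) γ ∈ N (mB γ) := hyp.1
          have hinf : cA * r (mB γ) ≤ Metric.infDist (yf (mB γ) γ)
              (↑(C (mB γ)) : Set (EuclideanSpace ℝ (Fin d))) := (hcaseB_iff _ _).1 hcB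
          have hval := hCval (mB γ) hrange.1 hrange.2 (cm (mB γ)) hcmC
            (yf (mB γ) γ) hyN hinf
          have hGeq : G (mB γ) = ballVal z P (cm (mB γ)) (r (mB γ)) := by
            rw [hGdef]
            simp only [if_pos (And.intro hrange.1 hrange.2)]
          rw [hGeq]
          linarith
        calc (((P.filter isB).filter (fun p => γp p = γ)).map
            (fun p => Metric.infDist p Cu ^ z)).sum
            ≤ (16*cA)^z * (((P.filter isB).filter (fun p => γp p = γ)).map
              (fun p => (r (mB γ) - dist p (yf (mB γ) γ))^z)).sum := hsum1
        _ ≤ (16*cA)^z * (G (mB γ) + θ) := by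
            apply mul_le_mul_of_nonneg_left _ h16cA
            linarith
    -- sum over γ of G (mB γ)
    have hsumG : ∑ γ ∈ Γ, G (mB γ)
        ≤ 2^(z+1) * clusterCost z P (↑Γ : Set (EuclideanSpace ℝ (Fin d))) := by
      have hstep : ∀ γ ∈ Γ, G (mB γ)
          ≤ ∑ ℓ ∈ Finset.Icc 1 L, (if mB γ = ℓ then G ℓ else 0) := by
        intro γ hγ
        rw [Finset.sum_ite_eq (Finset.Icc 1 L) (mB γ) G]
        by_cases hm : mB γ ∈ Finset.Icc 1 L
        · rw [if_pos hm]
        · rw [if_neg hm]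
          have : ¬ (1 ≤ mB γ ∧ mB γ ≤ L) := by
            intro hc
            exact hm (Finset.mem_Icc.2 hc)
          rw [hGdef]
          simp only [if_neg this]
          exact le_refl 0
      have hlevel : ∀ ℓ ∈ Finset.Icc 1 L,
          (k:ℝ) * G ℓ ≤ ∑ c ∈ Far ℓ, ballVal z P c (r ℓ) := by
        intro ℓ hℓ
        obtain ⟨h1, h2⟩ := Finset.mem_Icc.1 hℓ
        have hGℓ : G ℓ = ballVal z P (cm ℓ) (r ℓ) := by
          rw [hGdef]
          simp only [if_pos (And.intro h1 h2)]
        have hcmin := hcm ℓ h1 h2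
        calc (k:ℝ) * G ℓ ≤ ((Far ℓ).card : ℝ) * G ℓ :=
              mul_le_mul_of_nonneg_right (by exact_mod_cast hFarcard ℓ h1 h2) (hG0 ℓ)
        _ = ∑ _c ∈ Far ℓ, G ℓ := by rw [Finset.sum_const, nsmul_eq_mul]
        _ ≤ ∑ c ∈ Far ℓ, ballVal z P c (r ℓ) :=
              Finset.sum_le_sum (fun c hc => by rw [hGℓ]; exact hcmin.2 c hc)
      -- double counting over levels
      have hdc : ∑ ℓ ∈ Finset.Icc 1 L, (∑ c ∈ Far ℓ, ballVal z P c (r ℓ))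
          ≤ 2^(z+1) * clusterCost z P (↑Γ : Set (EuclideanSpace ℝ (Fin d))) := by
        have hlev : ∀ ℓ ∈ Finset.Icc 1 L, (∑ c ∈ Far ℓ, ballVal z P c (r ℓ))
            ≤ (P.map (fun q => if r ℓ ≤ 2 * D q then (r ℓ)^z else 0)).sum := by
          intro ℓ hℓ
          obtain ⟨h1, h2⟩ := Finset.mem_Icc.1 hℓ
          have hexp : ∀ c : EuclideanSpace ℝ (Fin d), ballVal z P c (r ℓ)
              = (P.map (fun q => if dist q c ≤ r ℓ then (r ℓ - dist q c)^z else 0)).sum :=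
            fun c => msum_filter_eq P _ _
          have hq : ∀ q ∈ P,
              (∑ c ∈ Far ℓ, if dist q c ≤ r ℓ then (r ℓ - dist q c)^z else 0)
                ≤ (if r ℓ ≤ 2 * D q then (r ℓ)^z else 0) := by
            intro q _
            by_cases hex : ∃ c ∈ Far ℓ, dist q c ≤ r ℓ
            · obtain ⟨c0, hc0F, hc0d⟩ := hex
              have hc0C : c0 ∈ C ℓ := hFarsub ℓ hc0F
              have hr0 := hrpos ℓ
              have huniq : ∀ c ∈ Far ℓ, c ≠ c0 →
                  (if dist q c ≤ r ℓ then (r ℓ - dist q c)^z else 0) = 0 := by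
                intro c hcF hne
                rw [if_neg]
                intro hd
                have h3r := hCsep ℓ h1 h2 c (hFarsub ℓ hcF) c0 hc0C hne
                have htr : dist c c0 ≤ dist c q + dist q c0 := dist_triangle _ _ _
                rw [dist_comm c q] at htr
                linarith
              rw [Finset.sum_eq_single c0 huniq (fun hn => absurd hc0F hn)]
              rw [if_pos hc0d]
              have hcond : r ℓ ≤ 2 * D q := by
                by_contra hcon
                push_neg at hcon
                obtain ⟨γ, hγ, hdγ⟩ := hDlt q (r ℓ / 2) (by linarith)
                have hfq := hFarprop ℓ c0 hc0F γ hγ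
                have htr : dist c0 γ ≤ dist c0 q + dist q γ := dist_triangle _ _ _
                rw [dist_comm c0 q] at htr
                linarith
              rw [if_pos hcond]
              have hd0 : (0:ℝ) ≤ dist q c0 := dist_nonneg
              exact pow_le_pow_left₀ (by linarith) (by linarith) z
            · push_neg at hex
              rw [Finset.sum_eq_zero (fun c hc => if_neg (not_le.2 (hex c hc)))]
              split
              · exact pow_nonneg (le_of_lt (hrpos ℓ)) z
              · exact le_refl 0
          calc ∑ c ∈ Far ℓ, ballVal z P c (r ℓ)
              = ∑ c ∈ Far ℓ, (P.map
                  (fun q => if dist q c ≤ r ℓ then (r ℓ - dist q c)^z else 0)).sum :=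
                Finset.sum_congr rfl (fun c _ => hexp c)
          _ = (P.map (fun q => ∑ c ∈ Far ℓ,
                if dist q c ≤ r ℓ then (r ℓ - dist q c)^z else 0)).sum :=
                (msum_swap P (Far ℓ) _).symm
          _ ≤ (P.map (fun q => if r ℓ ≤ 2 * D q then (r ℓ)^z else 0)).sum :=
                msum_le _ _ _ hq
        have hgeo : ∀ q ∈ P,
            (∑ ℓ ∈ Finset.Icc 1 L, if r ℓ ≤ 2 * D q then (r ℓ)^z else 0)
              ≤ 2 * (2 * D q)^z := by
          intro q _
          have hX0 : (0:ℝ) ≤ 2 * D q := by linarith [hDnonneg q]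
          have hterm : ∀ ℓ ∈ Finset.Icc 1 L,
              (if r ℓ ≤ 2 * D q then (r ℓ)^z else 0)
                ≤ (2 * D q)^(z-1) * (if r ℓ ≤ 2 * D q then r ℓ else 0) := by
            intro ℓ _
            by_cases hc : r ℓ ≤ 2 * D q
            · rw [if_pos hc, if_pos hc]
              have h1 : (r ℓ)^z = (r ℓ)^(z-1) * r ℓ := by
                rw [← pow_succ]
                congr 1
                omega
              rw [h1]
              exact mul_le_mul_of_nonneg_right
                (pow_le_pow_left₀ (le_of_lt (hrpos ℓ)) hc (z-1)) (le_of_lt (hrpos ℓ))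
            · rw [if_neg hc, if_neg hc, mul_zero]
          have hgb := geom_bound L (2 * D q) hX0
          simp only [hrr] at hgb
          calc (∑ ℓ ∈ Finset.Icc 1 L, if r ℓ ≤ 2 * D q then (r ℓ)^z else 0)
              ≤ ∑ ℓ ∈ Finset.Icc 1 L,
                (2 * D q)^(z-1) * (if r ℓ ≤ 2 * D q then r ℓ else 0) :=
                Finset.sum_le_sum hterm
          _ = (2 * D q)^(z-1) * ∑ ℓ ∈ Finset.Icc 1 L,
                (if r ℓ ≤ 2 * D q then r ℓ else 0) := by rw [Finset.mul_sum]
          _ ≤ (2 * D q)^(z-1) * (2 * (2 * D q)) :=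
                mul_le_mul_of_nonneg_left hgb (pow_nonneg hX0 _)
          _ = 2 * (2 * D q)^z := by
              rw [show (2 * D q)^z = (2 * D q)^(z-1) * (2 * D q) by
                rw [← pow_succ]
                congr 1
                omega]
              ring
        have hfinal : (P.map (fun q => 2 * (2 * D q)^z)).sum
            = 2^(z+1) * clusterCost z P (↑Γ : Set (EuclideanSpace ℝ (Fin d))) := by
          rw [hcostΓrw]
          have heq : ∀ q : EuclideanSpace ℝ (Fin d),
              2 * (2 * D q)^z = 2^(z+1) * (D q)^z := by
            intro q
            rw [mul_pow, pow_succ]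
            ring
          calc (P.map (fun q => 2 * (2 * D q)^z)).sum
              = (P.map (fun q => 2^(z+1) * (D q)^z)).sum := by
                congr 1
                exact Multiset.map_congr rfl (fun q _ => heq q)
          _ = 2^(z+1) * (P.map (fun q => (D q)^z)).sum := Multiset.sum_map_mul_left
        calc ∑ ℓ ∈ Finset.Icc 1 L, (∑ c ∈ Far ℓ, ballVal z P c (r ℓ))
            ≤ ∑ ℓ ∈ Finset.Icc 1 L,
              (P.map (fun q => if r ℓ ≤ 2 * D q then (r ℓ)^z else 0)).sum :=
              Finset.sum_le_sum hlev
        _ = (P.map (fun q => ∑ ℓ ∈ Finset.Icc 1 L,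
              if r ℓ ≤ 2 * D q then (r ℓ)^z else 0)).sum := by
            rw [msum_swap P (Finset.Icc 1 L)
              (fun ℓ q => if r ℓ ≤ 2 * D q then (r ℓ)^z else 0)]
        _ ≤ (P.map (fun q => 2 * (2 * D q)^z)).sum := msum_le _ _ _ hgeo
        _ = 2^(z+1) * clusterCost z P (↑Γ : Set (EuclideanSpace ℝ (Fin d))) := hfinal
      calc ∑ γ ∈ Γ, G (mB γ)
          ≤ ∑ γ ∈ Γ, ∑ ℓ ∈ Finset.Icc 1 L, (if mB γ = ℓ then G ℓ else 0) :=
            Finset.sum_le_sum hstep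
      _ = ∑ ℓ ∈ Finset.Icc 1 L, ∑ γ ∈ Γ, (if mB γ = ℓ then G ℓ else 0) :=
            Finset.sum_comm
      _ ≤ ∑ ℓ ∈ Finset.Icc 1 L, (k:ℝ) * G ℓ := by
            apply Finset.sum_le_sum
            intro ℓ _
            calc ∑ γ ∈ Γ, (if mB γ = ℓ then G ℓ else 0) ≤ ∑ _γ ∈ Γ, G ℓ :=
                Finset.sum_le_sum (fun γ _ => by
                  split
                  · exact le_refl _
                  · exact hG0 ℓ)
            _ = (k:ℝ) * G ℓ := by rw [Finset.sum_const, hΓcard, nsmul_eq_mul]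
      _ ≤ ∑ ℓ ∈ Finset.Icc 1 L, (∑ c ∈ Far ℓ, ballVal z P c (r ℓ)) :=
            Finset.sum_le_sum hlevel
      _ ≤ 2^(z+1) * clusterCost z P (↑Γ : Set (EuclideanSpace ℝ (Fin d))) := hdc
    -- combine
    calc ∑ γ ∈ Γ, (((P.filter isB).filter (fun p => γp p = γ)).map
          (fun p => Metric.infDist p Cu ^ z)).sum
        ≤ ∑ γ ∈ Γ, (16*cA)^z * (G (mB γ) + θ) := Finset.sum_le_sum hfiber
    _ = (16*cA)^z * (∑ γ ∈ Γ, G (mB γ)) + (16*cA)^z * ((k:ℝ)*θ) := by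
        rw [← Finset.mul_sum, Finset.sum_add_distrib, Finset.sum_const, hΓcard,
          nsmul_eq_mul, mul_add]
    _ ≤ (16*cA)^z * (2^(z+1) * clusterCost z P (↑Γ : Set (EuclideanSpace ℝ (Fin d))))
          + (16*cA)^z * ((k:ℝ)*θ) := by
        have := mul_le_mul_of_nonneg_left hsumG h16cA
        linarith
    _ = (16*cA)^z*2^(z+1) * clusterCost z P (↑Γ : Set (EuclideanSpace ℝ (Fin d)))
          + (16*cA)^z * ((k:ℝ)*θ) := by ring
  -- final assembly
  have hsplitP : clusterCost z P Cu
      = ((P.filter isB).map (fun p => Metric.infDist p Cu ^ z)).sum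
        + ((P.filter (fun p => ¬ isB p)).map (fun p => Metric.infDist p Cu ^ z)).sum := by
    have h := Multiset.filter_add_not isB P
    calc clusterCost z P Cu
        = (P.map (fun p => Metric.infDist p Cu ^ z)).sum := rfl
    _ = (((P.filter isB) + (P.filter (fun p => ¬ isB p))).map
          (fun p => Metric.infDist p Cu ^ z)).sum := by rw [h]
    _ = _ := by rw [Multiset.map_add, Multiset.sum_add]
  have hA1 : (0:ℝ) ≤ 2^z*(16*cA+32)^z := by positivity
  have hA2 : (0:ℝ) ≤ 2^z*(cA+2)^z := by
    have : (0:ℝ) < cA + 2 := by linarith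
    positivity
  have hA3 : (0:ℝ) ≤ (16*cA)^z*2^(z+1) := by positivity
  have hA4 : (0:ℝ) ≤ (16*cA)^z := by positivity
  have hkθ0 : (0:ℝ) ≤ (k:ℝ)*θ := by linarith
  have hx1 := mul_nonneg (by linarith : (0:ℝ) ≤ 2^z*(cA+2)^z + (16*cA)^z*2^(z+1) + (16*cA)^z)
    hcostΓ0
  have hx2 := mul_nonneg (by linarith : (0:ℝ) ≤ 2^z*(16*cA+32)^z + 2^z*(cA+2)^z + (16*cA)^z)
    hkθ0
  rw [hsplitP] at *
  nlinarith [hA, hB, hx1, hx2, hcostΓ0, hkθ0]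
end

section
/- Let z ≥ 1 be an integer, let P be a nonempty finite multiset of points in ℝ^d, and let μ(P) be its centroid. Then for every point m ∈ ℝ^d, ∑_{p∈P} ‖p − μ(P)‖^z ≤ 2^z · ∑_{p∈P} ‖p − m‖^z. In particular, taking m to be an optimal center for (1,z)-clustering of P, the centroid μ(P) is a 2^z-approximate solution to the (1,z)-clustering problem on P. -/
/-!
By the triangle inequality and the power-mean bound `(a + b)^z ≤ 2^(z-1) (a^z + b^z)`, each
`‖p - μ‖^z` is at most `2^(z-1) (‖p - m‖^z + ‖m - μ‖^z)`. Summing over `P`, it remains to bound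
`|P| ‖μ - m‖^z` by `∑ ‖p - m‖^z`, which is Jensen's inequality for the convex function
`x ↦ ‖x - m‖^z` at the centroid.
-/

open Multiset

variable {E : Type*}

noncomputable def Multiset.centroid [AddCommMonoid E] [Module ℝ E] (P : Multiset E) : E :=
  (card P : ℝ)⁻¹ • P.sum

theorem ConvexOn.map_centroid_le [AddCommGroup E] [Module ℝ E] {s : Set E} {g : E → ℝ}
    (hg : ConvexOn ℝ s g) {P : Multiset E} (hP : P ≠ 0) (hPs : ∀ p ∈ P, p ∈ s) :
    g P.centroid ≤ (card P : ℝ)⁻¹ * (P.map g).sum := by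
  classical
  have hcard : (card P : ℝ) ≠ 0 := by simpa using hP
  have h := hg.map_sum_le (t := Finset.univ) (w := fun _ : P.ToType => (card P : ℝ)⁻¹)
    (p := fun x : P.ToType => (x : E)) (fun _ _ => by positivity) (by simp [hcard])
    (fun x _ => hPs x coe_mem)
  rw [← Finset.smul_sum, ← Finset.smul_sum, ← sum_eq_sum_coe] at h
  simpa [Finset.sum, Multiset.centroid] using h

section NormedSpace

variable [SeminormedAddCommGroup E]

theorem norm_sub_pow_le_two_pow_pred_mul (a b c : E) (z : ℕ) :
    ‖a - c‖ ^ z ≤ 2 ^ (z - 1) * (‖a - b‖ ^ z + ‖b - c‖ ^ z) :=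
  (pow_le_pow_left₀ (norm_nonneg _) (norm_sub_le_norm_sub_add_norm_sub a b c) z).trans
    (add_pow_le (norm_nonneg _) (norm_nonneg _) z)

variable [NormedSpace ℝ E]

theorem Multiset.card_mul_norm_centroid_sub_pow_le (P : Multiset E) (m : E) (z : ℕ) :
    card P * ‖P.centroid - m‖ ^ z ≤ (P.map fun p => ‖p - m‖ ^ z).sum := by
  rcases eq_or_ne P 0 with rfl | hP
  · simp
  have hconvex : ConvexOn ℝ Set.univ fun p : E => ‖p - m‖ ^ z := by
    simpa only [Pi.pow_def, dist_eq_norm] using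
      (convexOn_univ_dist m).pow (fun _ _ => dist_nonneg) z
  have hcard : (0 : ℝ) < card P := by simpa [Nat.pos_iff_ne_zero] using hP
  rw [← le_inv_mul_iff₀ hcard]
  exact hconvex.map_centroid_le hP fun _ _ => Set.mem_univ _

theorem Multiset.sum_map_norm_sub_centroid_pow_le {z : ℕ} (hz : 1 ≤ z) (P : Multiset E) (m : E) :
    (P.map fun p => ‖p - P.centroid‖ ^ z).sum ≤ 2 ^ z * (P.map fun p => ‖p - m‖ ^ z).sum := by
  set S := (P.map fun p => ‖p - m‖ ^ z).sum
  calc (P.map fun p => ‖p - P.centroid‖ ^ z).sum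
      ≤ (P.map fun p => 2 ^ (z - 1) * (‖p - m‖ ^ z + ‖m - P.centroid‖ ^ z)).sum :=
        sum_map_le_sum_map _ _ fun p _ => norm_sub_pow_le_two_pow_pred_mul p m _ z
    _ = 2 ^ (z - 1) * (S + card P * ‖P.centroid - m‖ ^ z) := by
        rw [sum_map_mul_left, sum_map_add, map_const', sum_replicate, nsmul_eq_mul,
          norm_sub_rev]
    _ ≤ 2 ^ (z - 1) * (S + S) := by
        gcongr
        exact P.card_mul_norm_centroid_sub_pow_le m z
    _ = 2 ^ z * S := by
        rw [← two_mul, ← mul_assoc, ← pow_succ, Nat.sub_add_cancel hz]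

end NormedSpace

theorem centroid_is_two_pow_z_approx_general {d : ℕ} (z : ℕ) (hz : 1 ≤ z)
    (P : Multiset (EuclideanSpace ℝ (Fin d)))
    (m : EuclideanSpace ℝ (Fin d)) :
    (P.map (fun p => ‖p - (P.card : ℝ)⁻¹ • P.sum‖ ^ z)).sum
      ≤ 2 ^ z * (P.map (fun p => ‖p - m‖ ^ z)).sum :=
  P.sum_map_norm_sub_centroid_pow_le hz m

/-- **The centroid is a `2^z`-approximate `(1,z)`-center.** For every integer `z ≥ 1`,
every nonempty finite multiset `P` of points of `ℝ^d` with centroid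
`μ(P) = (∑_{p∈P} p) / |P|`, and every point `m ∈ ℝ^d`,
`∑_{p∈P} ‖p − μ(P)‖^z ≤ 2^z · ∑_{p∈P} ‖p − m‖^z`.  In particular (taking `m` to be an
optimal `(1,z)`-center), the centroid is a `2^z`-approximate solution to the
`(1,z)`-clustering problem on `P`. -/
theorem centroid_is_two_pow_z_approx {d : ℕ} (z : ℕ) (hz : 1 ≤ z)
    (P : Multiset (EuclideanSpace ℝ (Fin d))) (hP : P ≠ 0)
    (m : EuclideanSpace ℝ (Fin d)) :
    (P.map (fun p => ‖p - (P.card : ℝ)⁻¹ • P.sum‖ ^ z)).sum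
      ≤ 2 ^ z * (P.map (fun p => ‖p - m‖ ^ z)).sum :=
  centroid_is_two_pow_z_approx_general z hz P m
end

section
/- Let P be a nonempty finite multiset of points of the closed unit ball B(0,1) ⊆ ℝ^d, let e > 0 with |P| ≥ 2e, let n ∈ ℝ with |n − |P|| ≤ e, and let S ∈ ℝ^d with ‖S − ∑_{p∈P} p‖ ≤ e. Then n > 0 and ‖S/n − μ(P)‖ ≤ 5e/|P|. -/
/-!
Write `m = |P|` and `T = ∑_{p∈P} p`, so `‖T‖ ≤ m` because the points lie in the unit ball. Then
`S/n − T/m = n⁻¹ • ((S − T) + ((m − n)/m) • T)`, and both summands inside have norm at most `e`,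
so the error is at most `2e/n`. Since `n ≥ m − e ≥ m/2 > 0`, this is at most `4e/m ≤ 5e/m`.
-/

theorem norm_multiset_sum_le_card_mul {E : Type*} [SeminormedAddCommGroup E] {P : Multiset E}
    {r : ℝ} (h : ∀ p ∈ P, ‖p‖ ≤ r) : ‖P.sum‖ ≤ P.card * r := by
  have hmap : (P.map norm).sum ≤ (P.map norm).card • r :=
    Multiset.sum_le_card_nsmul _ _ fun x hx => by
      obtain ⟨p, hp, rfl⟩ := Multiset.mem_map.mp hx
      exact h p hp
  calc ‖P.sum‖ ≤ (P.map norm).sum := norm_multiset_sum_le P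
    _ ≤ P.card * r := by simpa only [Multiset.card_map, nsmul_eq_mul] using hmap

theorem norm_inv_smul_sub_inv_smul_le {E : Type*} [SeminormedAddCommGroup E] [NormedSpace ℝ E]
    {S T : E} {n m e : ℝ} (hn : 0 < n) (hm : 0 < m) (hT : ‖T‖ ≤ m) (hS : ‖S - T‖ ≤ e)
    (hnm : |n - m| ≤ e) : ‖n⁻¹ • S - m⁻¹ • T‖ ≤ 2 * e / n := by
  have hsplit : n⁻¹ • S - m⁻¹ • T = n⁻¹ • ((S - T) + ((m - n) / m) • T) := by
    have hcoef : n⁻¹ * ((m - n) / m) = n⁻¹ - m⁻¹ := by field_simp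
    rw [smul_add, smul_smul, hcoef]
    module
  have hscaled : ‖((m - n) / m) • T‖ ≤ e := by
    rw [norm_smul, Real.norm_eq_abs, abs_div, abs_of_pos hm, abs_sub_comm]
    have he : 0 ≤ e := (norm_nonneg _).trans hS
    calc |n - m| / m * ‖T‖ ≤ e / m * m := by gcongr
      _ = e := div_mul_cancel₀ e hm.ne'
  calc ‖n⁻¹ • S - m⁻¹ • T‖ = n⁻¹ * ‖(S - T) + ((m - n) / m) • T‖ := by
        rw [hsplit, norm_smul, Real.norm_of_nonneg (inv_nonneg.mpr hn.le)]
    _ ≤ n⁻¹ * (e + e) := by gcongr; exact (norm_add_le _ _).trans (add_le_add hS hscaled)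
    _ = 2 * e / n := by ring

theorem noisy_centroid_close_general {d : ℕ} (P : Multiset (EuclideanSpace ℝ (Fin d)))
    (hball : ∀ p ∈ P, p ∈ Metric.closedBall (0 : EuclideanSpace ℝ (Fin d)) 1)
    (e : ℝ) (he : 0 < e) (hcard : 2 * e ≤ (P.card : ℝ))
    (n : ℝ) (hn : |n - (P.card : ℝ)| ≤ e)
    (S : EuclideanSpace ℝ (Fin d)) (hS : ‖S - P.sum‖ ≤ e) :
    0 < n ∧ ‖n⁻¹ • S - (P.card : ℝ)⁻¹ • P.sum‖ ≤ 5 * e / P.card := by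
  have hm : (0 : ℝ) < P.card := by linarith
  have hhalf : (P.card : ℝ) / 2 ≤ n := by linarith [(abs_le.mp hn).1]
  have hn0 : 0 < n := by linarith
  have hsum : ‖P.sum‖ ≤ P.card := by
    simpa using norm_multiset_sum_le_card_mul fun p hp => mem_closedBall_zero_iff.mp (hball p hp)
  refine ⟨hn0, (norm_inv_smul_sub_inv_smul_le hn0 hm hsum hS hn).trans ?_⟩
  rw [div_le_div_iff₀ hn0 hm]
  nlinarith

/-- **The noisy centroid is close to the true centroid.** Let `P` be a nonempty finite
multiset of points of the closed unit ball of `ℝ^d`, let `e > 0` with `|P| ≥ 2e`, let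
`n ∈ ℝ` with `|n − |P|| ≤ e`, and let `S ∈ ℝ^d` with `‖S − ∑_{p∈P} p‖ ≤ e`.  Then
`n > 0` and `‖S/n − μ(P)‖ ≤ 5e/|P|`, where `μ(P) = (∑_{p∈P} p)/|P|` is the centroid. -/
theorem noisy_centroid_close {d : ℕ} (P : Multiset (EuclideanSpace ℝ (Fin d)))
    (hP : P ≠ 0)
    (hball : ∀ p ∈ P, p ∈ Metric.closedBall (0 : EuclideanSpace ℝ (Fin d)) 1)
    (e : ℝ) (he : 0 < e) (hcard : 2 * e ≤ (P.card : ℝ))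
    (n : ℝ) (hn : |n - (P.card : ℝ)| ≤ e)
    (S : EuclideanSpace ℝ (Fin d)) (hS : ‖S - P.sum‖ ≤ e) :
    0 < n ∧ ‖n⁻¹ • S - (P.card : ℝ)⁻¹ • P.sum‖ ≤ 5 * e / P.card :=
  noisy_centroid_close_general P hball e he hcard n hn S hS
end

section
/- Let P be a nonempty finite multiset of points of the closed unit ball B(0,1) ⊆ ℝ^d, let e > 0 with |P| ≥ 2e, let n ∈ ℝ with |n − |P|| ≤ e, and let S ∈ ℝ^d with ‖S − ∑_{p∈P} p‖ ≤ e. Then ∑_{p∈P} ‖p − S/n‖² ≤ ∑_{p∈P} ‖p − μ(P)‖² + 25e. That is, the approximate centroid S/n computed from noisy statistics has 1-means cost exceeding the optimal 1-means cost of P by at most 25e. -/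
/-!
Writing `μ` for the centroid and `N = |P|`, the cost of any centre `c` splits as
`∑ ‖p - c‖² = ∑ ‖p - μ‖² + N ‖c - μ‖²`, so only `N ‖S/n - μ‖²` has to be bounded.
Since `n (S/n - μ) = (S - ∑ p) + (1 - n/N) ∑ p` and `‖∑ p‖ ≤ N`, we get `n ‖S/n - μ‖ ≤ 2e`;
as `n ≥ N - e ≥ N/2` and `n ≥ e`, this gives `N ‖S/n - μ‖² ≤ 2 (n ‖S/n - μ‖)² / n ≤ 8e`.
-/

namespace Multiset

variable {E : Type*} [NormedAddCommGroup E] [InnerProductSpace ℝ E]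

noncomputable def centroid_s4 (P : Multiset E) : E := (P.card : ℝ)⁻¹ • P.sum

theorem sum_map_norm_sub_sq (P : Multiset E) (c m : E) :
    (P.map fun p => ‖p - c‖ ^ 2).sum
      = (P.map fun p => ‖p - m‖ ^ 2).sum
        + 2 * inner ℝ (P.sum - (P.card : ℝ) • m) (m - c) + P.card * ‖m - c‖ ^ 2 := by
  induction P using Multiset.induction_on with
  | empty => simp
  | cons p P ih =>
    simp only [map_cons, sum_cons, card_cons, Nat.cast_succ]
    have hsplit : p + P.sum - ((P.card : ℝ) + 1) • m = (p - m) + (P.sum - (P.card : ℝ) • m) := by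
      rw [add_smul, one_smul]; abel
    rw [hsplit, inner_add_left, ← sub_add_sub_cancel p m c, norm_add_sq_real, ih]
    ring

theorem sum_map_norm_sub_sq_eq_centroid (P : Multiset E) (hP : (P.card : ℝ) ≠ 0) (c : E) :
    (P.map fun p => ‖p - c‖ ^ 2).sum
      = (P.map fun p => ‖p - P.centroid_s4‖ ^ 2).sum + P.card * ‖c - P.centroid_s4‖ ^ 2 := by
  have hcentered : P.sum - (P.card : ℝ) • P.centroid_s4 = 0 := by
    rw [centroid_s4, smul_smul, mul_inv_cancel₀ hP, one_smul, sub_self]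
  rw [sum_map_norm_sub_sq P c P.centroid_s4, hcentered, inner_zero_left, norm_sub_rev]
  ring

theorem norm_sum_le_card {F : Type*} [SeminormedAddCommGroup F] (P : Multiset F)
    (hP : ∀ p ∈ P, ‖p‖ ≤ 1) : ‖P.sum‖ ≤ P.card :=
  calc ‖P.sum‖ ≤ (P.map fun p => ‖p‖).sum := norm_multiset_sum_le P
    _ ≤ (P.map fun _ => (1 : ℝ)).sum := sum_map_le_sum_map _ _ hP
    _ = P.card := by simp

theorem mul_norm_inv_smul_sub_centroid_le (P : Multiset E) (hP : ∀ p ∈ P, ‖p‖ ≤ 1)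
    (hcard : 0 < (P.card : ℝ)) {e n : ℝ} (hn : 0 < n) (hne : |n - P.card| ≤ e)
    {S : E} (hS : ‖S - P.sum‖ ≤ e) :
    n * ‖n⁻¹ • S - P.centroid_s4‖ ≤ 2 * e := by
  set N : ℝ := (P.card : ℝ)
  have hdecomp : n • (n⁻¹ • S - P.centroid_s4) = (S - P.sum) + (1 - n / N) • P.sum := by
    rw [centroid_s4, smul_sub, smul_smul, smul_smul, mul_inv_cancel₀ hn.ne', one_smul, sub_smul,
      one_smul, div_eq_mul_inv]
    abel
  have hscale : |1 - n / N| * ‖P.sum‖ ≤ e := by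
    rw [one_sub_div hcard.ne', abs_div, abs_sub_comm, abs_of_pos hcard, div_mul_eq_mul_div,
      div_le_iff₀ hcard]
    exact mul_le_mul hne (norm_sum_le_card P hP) (norm_nonneg _) ((abs_nonneg _).trans hne)
  calc n * ‖n⁻¹ • S - P.centroid_s4‖ = ‖n • (n⁻¹ • S - P.centroid_s4)‖ := by
        rw [norm_smul, Real.norm_of_nonneg hn.le]
    _ ≤ ‖S - P.sum‖ + |1 - n / N| * ‖P.sum‖ := by
        rw [hdecomp, ← Real.norm_eq_abs, ← norm_smul]; exact norm_add_le _ _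
    _ ≤ 2 * e := by linarith

end Multiset

theorem noisy_centroid_cost_general {d : ℕ} (P : Multiset (EuclideanSpace ℝ (Fin d)))
    (hball : ∀ p ∈ P, p ∈ Metric.closedBall (0 : EuclideanSpace ℝ (Fin d)) 1)
    (e : ℝ) (he : 0 < e) (hcard : 2 * e ≤ (P.card : ℝ))
    (n : ℝ) (hn : |n - (P.card : ℝ)| ≤ e)
    (S : EuclideanSpace ℝ (Fin d)) (hS : ‖S - P.sum‖ ≤ e) :
    (P.map (fun p => ‖p - n⁻¹ • S‖ ^ 2)).sum
      ≤ (P.map (fun p => ‖p - (P.card : ℝ)⁻¹ • P.sum‖ ^ 2)).sum + 25 * e := by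
  have hN : 0 < (P.card : ℝ) := by linarith
  have hn_ge : P.card - e ≤ n := by linarith [(abs_le.mp hn).1]
  have hP : ∀ p ∈ P, ‖p‖ ≤ 1 := fun p hp => mem_closedBall_zero_iff.mp (hball p hp)
  have hbound := P.mul_norm_inv_smul_sub_centroid_le hP hN (by linarith) hn hS
  rw [P.sum_map_norm_sub_sq_eq_centroid hN.ne']
  set t := ‖n⁻¹ • S - P.centroid_s4‖
  have ht : 0 ≤ t := norm_nonneg _
  have hcost : P.card * t ^ 2 ≤ 8 * e := by
    nlinarith [mul_le_mul_of_nonneg_right hbound ht, mul_nonneg (mul_nonneg ht ht) he.le]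
  exact add_le_add_right (hcost.trans (by linarith)) _

/-- **1-means cost of the noisy centroid.** Let `P` be a nonempty finite multiset of
points of the closed unit ball of `ℝ^d`, let `e > 0` with `|P| ≥ 2e`, let `n ∈ ℝ` with
`|n − |P|| ≤ e`, and let `S ∈ ℝ^d` with `‖S − ∑_{p∈P} p‖ ≤ e`.  Then
`∑_{p∈P} ‖p − S/n‖² ≤ ∑_{p∈P} ‖p − μ(P)‖² + 25e`, where `μ(P) = (∑_{p∈P} p)/|P|`:
the approximate centroid `S/n` has 1-means cost exceeding the optimal 1-means cost of
`P` by at most `25e`. -/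
theorem noisy_centroid_cost {d : ℕ} (P : Multiset (EuclideanSpace ℝ (Fin d)))
    (hP : P ≠ 0)
    (hball : ∀ p ∈ P, p ∈ Metric.closedBall (0 : EuclideanSpace ℝ (Fin d)) 1)
    (e : ℝ) (he : 0 < e) (hcard : 2 * e ≤ (P.card : ℝ))
    (n : ℝ) (hn : |n - (P.card : ℝ)| ≤ e)
    (S : EuclideanSpace ℝ (Fin d)) (hS : ‖S - P.sum‖ ≤ e) :
    (P.map (fun p => ‖p - n⁻¹ • S‖ ^ 2)).sum
      ≤ (P.map (fun p => ‖p - (P.card : ℝ)⁻¹ • P.sum‖ ^ 2)).sum + 25 * e :=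
  noisy_centroid_cost_general P hball e he hcard n hn S hS
end

section
/- Let P be a nonempty finite multiset of points of the closed unit ball B(0,1) ⊆ ℝ^d, let e > 0 with |P| ≥ 2e, and let n ∈ ℝ, S ∈ ℝ^d and V ∈ ℝ satisfy |n − |P|| ≤ e, ‖S − ∑_{p∈P} p‖ ≤ e and |V − ∑_{p∈P} ‖p‖²| ≤ e. Then n > 0 and | (V − ‖S‖²/n) − (∑_{p∈P} ‖p‖² − ‖∑_{p∈P} p‖²/|P|) | ≤ 12e. In particular, the quantity V − ‖S‖²/n estimates the optimal 1-means cost ∑_{p∈P} ‖p − μ(P)‖² up to an additive error of 12e. -/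
theorem abs_sq_sub_sq_le {a b e : ℝ} (ha : 0 ≤ a) (hb : 0 ≤ b) (h : |a - b| ≤ e) :
    |a ^ 2 - b ^ 2| ≤ (2 * b + e) * e := by
  rw [sq_sub_sq, abs_mul, abs_of_nonneg (add_nonneg ha hb)]
  have : a ≤ b + e := by linarith [le_abs_self (a - b)]
  exact mul_le_mul (by linarith) h (abs_nonneg _) (by linarith [abs_nonneg (a - b)])

theorem abs_sq_div_sub_sq_div_le {a b m n e : ℝ} (ha : 0 ≤ a) (hb : 0 ≤ b) (hbm : b ≤ m)
    (hab : |a - b| ≤ e) (hnm : |n - m| ≤ e) (hem : 2 * e ≤ m) (hm : 0 < m) :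
    |a ^ 2 / n - b ^ 2 / m| ≤ 7 * e := by
  have he : 0 ≤ e := (abs_nonneg _).trans hab
  have hn : m / 2 ≤ n := by linarith [neg_abs_le (n - m)]
  have hn0 : 0 < n := by linarith
  have hnum : |a ^ 2 - b ^ 2| / n ≤ 5 * e := by
    rw [div_le_iff₀ hn0]
    nlinarith [abs_sq_sub_sq_le ha hb hab]
  have hdenom : |b ^ 2 / n - b ^ 2 / m| ≤ 2 * e := by
    have : b ^ 2 / n - b ^ 2 / m = b ^ 2 / m * (m - n) / n := by field_simp
    rw [this, abs_div, abs_mul, abs_of_pos hn0, abs_sub_comm, div_le_iff₀ hn0,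
      abs_of_nonneg (by positivity)]
    have hbb : b ^ 2 / m ≤ m := by rw [div_le_iff₀ hm]; nlinarith
    nlinarith [abs_nonneg (n - m)]
  calc |a ^ 2 / n - b ^ 2 / m| ≤ |a ^ 2 / n - b ^ 2 / n| + |b ^ 2 / n - b ^ 2 / m| :=
        abs_sub_le _ _ _
    _ = |a ^ 2 - b ^ 2| / n + |b ^ 2 / n - b ^ 2 / m| := by
        rw [div_sub_div_same, abs_div, abs_of_pos hn0]
    _ ≤ 7 * e := by linarith

theorem noisy_cost_estimate_general {d : ℕ} (P : Multiset (EuclideanSpace ℝ (Fin d)))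
    (hball : ∀ p ∈ P, p ∈ Metric.closedBall (0 : EuclideanSpace ℝ (Fin d)) 1)
    (e : ℝ) (he : 0 < e) (hcard : 2 * e ≤ (P.card : ℝ))
    (n : ℝ) (hn : |n - (P.card : ℝ)| ≤ e)
    (S : EuclideanSpace ℝ (Fin d)) (hS : ‖S - P.sum‖ ≤ e)
    (V : ℝ) (hV : |V - (P.map (fun p => ‖p‖ ^ 2)).sum| ≤ e) :
    0 < n ∧
      |(V - ‖S‖ ^ 2 / n)
          - ((P.map (fun p => ‖p‖ ^ 2)).sum - ‖P.sum‖ ^ 2 / P.card)| ≤ 12 * e := by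
  have hm : (0 : ℝ) < P.card := by linarith
  have hsum : ‖P.sum‖ ≤ P.card :=
    (norm_multiset_sum_le_card_mul fun p hp => by simpa using hball p hp).trans_eq (mul_one _)
  have hquad := abs_sq_div_sub_sq_div_le (norm_nonneg S) (norm_nonneg P.sum) hsum
    ((abs_norm_sub_norm_le _ _).trans hS) hn hcard hm
  refine ⟨by linarith [neg_abs_le (n - P.card)], ?_⟩
  calc _ = |(V - (P.map (fun p => ‖p‖ ^ 2)).sum) - (‖S‖ ^ 2 / n - ‖P.sum‖ ^ 2 / P.card)| := by
        ring_nf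
    _ ≤ |V - (P.map (fun p => ‖p‖ ^ 2)).sum| + |‖S‖ ^ 2 / n - ‖P.sum‖ ^ 2 / P.card| :=
        abs_sub _ _
    _ ≤ 12 * e := by linarith

/-- **Estimating the 1-means cost from noisy statistics.** Let `P` be a nonempty finite
multiset of points of the closed unit ball of `ℝ^d`, let `e > 0` with `|P| ≥ 2e`, and
let `n ∈ ℝ`, `S ∈ ℝ^d` and `V ∈ ℝ` satisfy `|n − |P|| ≤ e`, `‖S − ∑_{p∈P} p‖ ≤ e` and
`|V − ∑_{p∈P} ‖p‖²| ≤ e`.  Then `n > 0` and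
`|(V − ‖S‖²/n) − (∑_{p∈P} ‖p‖² − ‖∑_{p∈P} p‖²/|P|)| ≤ 12e`; in particular `V − ‖S‖²/n`
estimates the optimal 1-means cost `∑_{p∈P} ‖p − μ(P)‖²` up to an additive error
of `12e`. -/
theorem noisy_cost_estimate {d : ℕ} (P : Multiset (EuclideanSpace ℝ (Fin d)))
    (hP : P ≠ 0)
    (hball : ∀ p ∈ P, p ∈ Metric.closedBall (0 : EuclideanSpace ℝ (Fin d)) 1)
    (e : ℝ) (he : 0 < e) (hcard : 2 * e ≤ (P.card : ℝ))
    (n : ℝ) (hn : |n - (P.card : ℝ)| ≤ e)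
    (S : EuclideanSpace ℝ (Fin d)) (hS : ‖S - P.sum‖ ≤ e)
    (V : ℝ) (hV : |V - (P.map (fun p => ‖p‖ ^ 2)).sum| ≤ e) :
    0 < n ∧
      |(V - ‖S‖ ^ 2 / n)
          - ((P.map (fun p => ‖p‖ ^ 2)).sum - ‖P.sum‖ ^ 2 / P.card)| ≤ 12 * e :=
  noisy_cost_estimate_general P hball e he hcard n hn S hS V hV
end

section
/- Let (X, dist) be a metric space, let Y ⊆ X have diameter at most 1, let z ≥ 1 be an integer, α > 0, e ≥ 0, and k' ≥ 1 an integer. Let P be a finite multiset of points of Y, let s_1, …, s_{k'} ∈ Y, and let P = P_1 ⊔ … ⊔ P_{k'} be a partition of P. Let n_1, …, n_{k'} ≥ 0 be reals with |n_i − |P_i|| ≤ e for each i. Then for every nonempty finite set Γ ⊆ Y, ∑_{i=1}^{k'} n_i·dist(s_i, Γ)^z ≤ (1+1/α)^{z−1}·∑_{i=1}^{k'} ∑_{p∈P_i} dist(p, s_i)^z + (1+α)^{z−1}·∑_{p∈P} dist(p, Γ)^z + k'·e. -/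
/-!
For conjugate exponents `p, q` convexity of `t ↦ t ^ z` gives the weak triangle inequality
`(a + b) ^ z ≤ p ^ (z - 1) a ^ z + q ^ (z - 1) b ^ z`; with `p = 1 + 1/α`, `q = 1 + α` it bounds
`dist(s_i, Γ) ^ z` by `dist(x, s_i) ^ z` and `dist(x, Γ) ^ z` for every point `x` of the part
`P_i`. Summing over `P_i` bounds `|P_i| · dist(s_i, Γ) ^ z`, and replacing `|P_i|` by `n_i`
costs at most `e`, because `dist(s_i, Γ) ≤ 1` inside a set of diameter at most `1`.
-/

open Metric

theorem Real.HolderConjugate.add_pow_le {p q : ℝ} (hpq : p.HolderConjugate q) {a b : ℝ}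
    (ha : 0 ≤ a) (hb : 0 ≤ b) (z : ℕ) :
    (a + b) ^ z ≤ p ^ (z - 1) * a ^ z + q ^ (z - 1) * b ^ z := by
  rcases z with _ | z
  · norm_num
  -- `a + b = p⁻¹ • (p * a) + q⁻¹ • (q * b)` is a convex combination.
  have hconv := (convexOn_pow (z + 1)).2 (Set.mem_Ici.2 (mul_nonneg hpq.nonneg ha))
    (Set.mem_Ici.2 (mul_nonneg hpq.symm.nonneg hb)) hpq.inv_nonneg hpq.symm.inv_nonneg
    hpq.inv_add_inv_eq_one
  have hp := hpq.ne_zero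
  have hq := hpq.symm.ne_zero
  simp only [smul_eq_mul, inv_mul_cancel_left₀ hp, inv_mul_cancel_left₀ hq] at hconv
  refine hconv.trans_eq ?_
  simp only [Nat.add_sub_cancel, mul_pow, pow_succ]
  field_simp

section

variable {X : Type*} [PseudoMetricSpace X] {p q : ℝ} (hpq : p.HolderConjugate q)
include hpq

theorem Metric.infDist_pow_le (x y : X) (S : Set X) (z : ℕ) :
    infDist x S ^ z ≤ p ^ (z - 1) * dist y x ^ z + q ^ (z - 1) * infDist y S ^ z := by
  calc infDist x S ^ z ≤ (dist y x + infDist y S) ^ z := by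
        gcongr
        · exact infDist_nonneg
        · rw [add_comm, dist_comm]
          exact infDist_le_infDist_add_dist
    _ ≤ _ := hpq.add_pow_le dist_nonneg infDist_nonneg z

theorem Metric.card_mul_infDist_pow_le (P : Multiset X) (x : X) (S : Set X) (z : ℕ) :
    (P.card : ℝ) * infDist x S ^ z
      ≤ p ^ (z - 1) * (P.map fun y => dist y x ^ z).sum
        + q ^ (z - 1) * (P.map fun y => infDist y S ^ z).sum := by
  rw [← Multiset.sum_map_mul_left, ← Multiset.sum_map_mul_left, ← Multiset.sum_map_add,
    ← nsmul_eq_mul, ← Multiset.sum_replicate, ← Multiset.map_const']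
  exact Multiset.sum_map_le_sum_map _ _ fun y _ => infDist_pow_le hpq x y S z

end

theorem mul_le_mul_add_of_abs_sub_le {w m e t : ℝ} (hwm : |w - m| ≤ e) (he : 0 ≤ e)
    (ht₀ : 0 ≤ t) (ht₁ : t ≤ 1) : w * t ≤ m * t + e := by
  have hw : w ≤ m + e := by linarith [(abs_sub_le_iff.mp hwm).1]
  nlinarith

theorem weighted_centers_cost_bound_general {X : Type*} [MetricSpace X] (Y : Set X)
    (hY : ∀ x ∈ Y, ∀ y ∈ Y, dist x y ≤ 1)
    (z : ℕ) (α : ℝ) (hα : 0 < α) (e : ℝ) (he : 0 ≤ e)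
    (k' : ℕ)
    (Pi : Fin k' → Multiset X)
    (s : Fin k' → X) (hs : ∀ i, s i ∈ Y)
    (n : Fin k' → ℝ)
    (hne : ∀ i, |n i - ((Pi i).card : ℝ)| ≤ e)
    (Γ : Finset X) (hΓ : Γ.Nonempty) (hΓY : ↑Γ ⊆ Y) :
    ∑ i, n i * Metric.infDist (s i) (↑Γ : Set X) ^ z
      ≤ (1 + 1 / α) ^ (z - 1)
            * ∑ i, ((Pi i).map (fun p => dist p (s i) ^ z)).sum
        + (1 + α) ^ (z - 1)
            * ((∑ i, Pi i).map (fun p => Metric.infDist p (↑Γ : Set X) ^ z)).sum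
        + k' * e := by
  have hpq : (1 + 1 / α).HolderConjugate (1 + α) :=
    Real.holderConjugate_iff.2 ⟨by simp [hα], by field_simp; ring⟩
  obtain ⟨γ, hγ⟩ := hΓ
  have hinfDist_le_one (i : Fin k') : infDist (s i) (Γ : Set X) ≤ 1 :=
    (infDist_le_dist_of_mem (Finset.mem_coe.2 hγ)).trans (hY _ (hs i) _ (hΓY hγ))
  calc ∑ i, n i * infDist (s i) Γ ^ z
      ≤ ∑ i, ((Pi i).card * infDist (s i) Γ ^ z + e) :=
        Finset.sum_le_sum fun i _ => mul_le_mul_add_of_abs_sub_le (hne i) he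
          (pow_nonneg infDist_nonneg z) (pow_le_one₀ infDist_nonneg (hinfDist_le_one i))
    _ ≤ ∑ i, ((1 + 1 / α) ^ (z - 1) * ((Pi i).map fun p => dist p (s i) ^ z).sum
          + (1 + α) ^ (z - 1) * ((Pi i).map fun p => infDist p Γ ^ z).sum + e) := by
        gcongr with i
        exact card_mul_infDist_pow_le hpq (Pi i) (s i) Γ z
    _ = _ := by
        rw [← Multiset.coe_mapAddMonoidHom, map_sum, Multiset.sum_sum]
        simp [Finset.sum_add_distrib, Finset.mul_sum]

/-- **Cost of the weighted centers against any solution.** Let `Y` be a subset of a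
metric space `X` of diameter at most `1`, let `z ≥ 1` be an integer, `α > 0`, `e ≥ 0`,
and `k' ≥ 1`.  Let `P = P_1 ⊔ … ⊔ P_{k'}` be a finite multiset of points of `Y`
partitioned into `k'` parts, let `s_1, …, s_{k'} ∈ Y`, and let `n_1, …, n_{k'} ≥ 0` be
reals with `|n_i − |P_i|| ≤ e` for each `i`.  Then for every nonempty finite `Γ ⊆ Y`,
`∑_i n_i·dist(s_i, Γ)^z
  ≤ (1+1/α)^{z−1}·∑_i ∑_{p∈P_i} dist(p, s_i)^z
    + (1+α)^{z−1}·∑_{p∈P} dist(p, Γ)^z + k'·e`. -/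
theorem weighted_centers_cost_bound {X : Type*} [MetricSpace X] (Y : Set X)
    (hY : ∀ x ∈ Y, ∀ y ∈ Y, dist x y ≤ 1)
    (z : ℕ) (hz : 1 ≤ z) (α : ℝ) (hα : 0 < α) (e : ℝ) (he : 0 ≤ e)
    (k' : ℕ) (hk' : 1 ≤ k')
    (Pi : Fin k' → Multiset X) (hPY : ∀ i, ∀ p ∈ Pi i, p ∈ Y)
    (s : Fin k' → X) (hs : ∀ i, s i ∈ Y)
    (n : Fin k' → ℝ) (hn0 : ∀ i, 0 ≤ n i)
    (hne : ∀ i, |n i - ((Pi i).card : ℝ)| ≤ e)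
    (Γ : Finset X) (hΓ : Γ.Nonempty) (hΓY : ↑Γ ⊆ Y) :
    ∑ i, n i * Metric.infDist (s i) (↑Γ : Set X) ^ z
      ≤ (1 + 1 / α) ^ (z - 1)
            * ∑ i, ((Pi i).map (fun p => dist p (s i) ^ z)).sum
        + (1 + α) ^ (z - 1)
            * ((∑ i, Pi i).map (fun p => Metric.infDist p (↑Γ : Set X) ^ z)).sum
        + k' * e :=
  weighted_centers_cost_bound_general Y hY z α hα e he k' Pi s hs n hne Γ hΓ hΓY
end

section
/- Let (X, dist) be a metric space, let z ≥ 1 be an integer, let P be a finite multiset of points of X, let Γ ⊆ X be finite and nonempty, let x ∈ X and r > 0. If the closed ball B(x, r) contains no point of Γ (i.e., dist(x, γ) > r for every γ ∈ Γ), then ∑_{p∈P, dist(p,x)≤r} dist(p, Γ)^z ≥ ∑_{p∈P, dist(p,x)≤r} (r − dist(x, p))^z. That is, cost_z(P ∩ B(x,r), Γ) ≥ val(B(x, r)). -/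
/-- **Uncovered balls have value at most their cost.** Let `(X, dist)` be a metric
space, `z ≥ 1` an integer, `P` a finite multiset of points of `X`, `Γ ⊆ X` finite and
nonempty, `x ∈ X` and `r > 0`.  If the closed ball `B(x, r)` contains no point of `Γ`
(i.e. `dist(x, γ) > r` for every `γ ∈ Γ`), then
`∑_{p∈P, dist(p,x)≤r} dist(p, Γ)^z ≥ ∑_{p∈P, dist(p,x)≤r} (r − dist(x, p))^z`,
that is, `cost_z(P ∩ B(x,r), Γ) ≥ val(B(x, r))`. -/
theorem uncovered_ball_value_le_cost {X : Type*} [MetricSpace X]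
    (z : ℕ) (hz : 1 ≤ z) (P : Multiset X)
    (Γ : Finset X) (hΓ : Γ.Nonempty)
    (x : X) (r : ℝ) (hr : 0 < r)
    (hcov : ∀ γ ∈ Γ, r < dist x γ) :
    ((P.filter (fun p => dist p x ≤ r)).map (fun p => (r - dist x p) ^ z)).sum
      ≤ ((P.filter (fun p => dist p x ≤ r)).map
          (fun p => Metric.infDist p (↑Γ : Set X) ^ z)).sum := by
  apply Multiset.sum_map_le_sum_map
  intro p hp
  rw [Multiset.mem_filter] at hp
  have hpx : dist p x ≤ r := hp.2
  have hle : r - dist x p ≤ Metric.infDist p (↑Γ : Set X) := by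
    by_contra h
    push_neg at h
    obtain ⟨γ, hγ, hd⟩ := (Metric.infDist_lt_iff (by exact_mod_cast hΓ.to_set)).1 h
    have : r < dist x γ := hcov γ (by exact_mod_cast hγ)
    have htri := dist_triangle x p γ
    linarith
  exact pow_le_pow_left₀ (by rw [dist_comm] at hpx; linarith) hle z
end

section
/- Let (X, dist) be a metric space, let z ≥ 1 be an integer, let P be a finite multiset of points of X, and let Γ ⊆ X be finite and nonempty. Let B(x_1, r_1), …, B(x_m, r_m) be closed balls that are pairwise disjoint as subsets of X and such that no B(x_i, r_i) contains a point of Γ. Then ∑_{i=1}^m ∑_{p∈P, dist(p,x_i)≤r_i} (r_i − dist(p, x_i))^z ≤ ∑_{p∈P} dist(p, Γ)^z, i.e., the sum of the values of the balls is at most cost_z(P, Γ). -/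
lemma filter_map_sum_eq {X : Type*} (P : Multiset X) (q : X → Prop) [DecidablePred q]
    (f : X → ℝ) :
    ((P.filter q).map f).sum = (P.map fun p => if q p then f p else 0).sum := by
  induction P using Multiset.induction with
  | empty => simp
  | cons a s ih =>
    by_cases h : q a <;> simp [Multiset.filter_cons, h, ih]

lemma sum_map_swap {X ι : Type*} [Fintype ι] (P : Multiset X) (g : ι → X → ℝ) :
    ∑ i, (P.map (g i)).sum = (P.map fun p => ∑ i, g i p).sum := by
  induction P using Multiset.induction with
  | empty => simp
  | cons a s ih => simp [Finset.sum_add_distrib, ih]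

/-- **Sum of values of disjoint uncovered balls is at most the cost.** Let `(X, dist)`
be a metric space, `z ≥ 1` an integer, `P` a finite multiset of points of `X` and
`Γ ⊆ X` finite and nonempty.  Let `B(x_1, r_1), …, B(x_m, r_m)` be closed balls that
are pairwise disjoint as subsets of `X` and such that no `B(x_i, r_i)` contains a point
of `Γ`.  Then `∑_{i=1}^m ∑_{p∈P, dist(p,x_i)≤r_i} (r_i − dist(p, x_i))^z
  ≤ ∑_{p∈P} dist(p, Γ)^z`, i.e. the sum of the values of the balls is at most
`cost_z(P, Γ)`. -/
theorem disjoint_uncovered_balls_value_le_cost {X : Type*} [MetricSpace X]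
    (z : ℕ) (hz : 1 ≤ z) (P : Multiset X)
    (Γ : Finset X) (hΓ : Γ.Nonempty)
    (m : ℕ) (x : Fin m → X) (r : Fin m → ℝ) (hr : ∀ i, 0 < r i)
    (hdisj : ∀ i j : Fin m, i ≠ j →
      Disjoint (Metric.closedBall (x i) (r i)) (Metric.closedBall (x j) (r j)))
    (hcov : ∀ i : Fin m, ∀ γ ∈ Γ, γ ∉ Metric.closedBall (x i) (r i)) :
    ∑ i, ((P.filter (fun p => dist p (x i) ≤ r i)).map
        (fun p => (r i - dist p (x i)) ^ z)).sum
      ≤ (P.map (fun p => Metric.infDist p (↑Γ : Set X) ^ z)).sum := by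
  have key : ∀ p : X,
      (∑ i, if dist p (x i) ≤ r i then (r i - dist p (x i)) ^ z else 0)
        ≤ Metric.infDist p (↑Γ : Set X) ^ z := by
    intro p
    have hnn : 0 ≤ Metric.infDist p (↑Γ : Set X) ^ z :=
      pow_nonneg Metric.infDist_nonneg z
    by_cases h : ∃ i, dist p (x i) ≤ r i
    · obtain ⟨i₀, hi₀⟩ := h
      have hsum : (∑ i, if dist p (x i) ≤ r i then (r i - dist p (x i)) ^ z else 0)
          = (r i₀ - dist p (x i₀)) ^ z := by
        rw [Finset.sum_eq_single i₀]
        · rw [if_pos hi₀]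
        · intro j _ hj
          rw [if_neg]
          intro hj'
          exact Set.disjoint_left.mp (hdisj j i₀ hj)
            (Metric.mem_closedBall.mpr hj') (Metric.mem_closedBall.mpr hi₀)
        · intro h; exact absurd (Finset.mem_univ i₀) h
      rw [hsum]
      have h1 : 0 ≤ r i₀ - dist p (x i₀) := by linarith
      have h2 : r i₀ - dist p (x i₀) ≤ Metric.infDist p (↑Γ : Set X) := by
        by_contra hc
        push_neg at hc
        obtain ⟨γ, hγ, hlt⟩ := (Metric.infDist_lt_iff hΓ.to_set).mp hc
        have hγΓ : γ ∈ Γ := by exact_mod_cast hγ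
        have hd : r i₀ < dist γ (x i₀) := by
          have := hcov i₀ γ hγΓ
          simpa [Metric.mem_closedBall, not_le] using this
        have htri : dist γ (x i₀) ≤ dist γ p + dist p (x i₀) := dist_triangle _ _ _
        rw [dist_comm γ p] at htri
        linarith
      exact pow_le_pow_left₀ h1 h2 z
    · push_neg at h
      rw [Finset.sum_eq_zero (fun i _ => if_neg (not_le.mpr (h i)))]
      exact hnn
  calc ∑ i, ((P.filter (fun p => dist p (x i) ≤ r i)).map
        (fun p => (r i - dist p (x i)) ^ z)).sum
      = ∑ i, (P.map fun p =>
          if dist p (x i) ≤ r i then (r i - dist p (x i)) ^ z else 0).sum := by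
        simp_rw [filter_map_sum_eq]
    _ = (P.map fun p => ∑ i,
          if dist p (x i) ≤ r i then (r i - dist p (x i)) ^ z else 0).sum :=
        sum_map_swap _ _
    _ ≤ (P.map (fun p => Metric.infDist p (↑Γ : Set X) ^ z)).sum :=
        Multiset.sum_map_le_sum_map _ _ (fun p _ => key p)
end

section
/- Let (X, dist) be a metric space, let z ≥ 1 be an integer, let c ≥ 0 and r > 0 be reals, let p, γ, x ∈ X, and let C ⊆ X be finite and nonempty. Assume dist(γ, x) ≤ r/2, dist(γ, C) ≤ (2c+1)·r, and dist(p, x) ≤ r. Then dist(p, C)^z ≤ (16c+24)^z · ( dist(p, γ)^z + (r − dist(p, x))^z ). -/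
/-!
The points `p` of the ball `B(x, r)` satisfy `r ≤ 2 (dist(p, γ) + (r − dist(p, x)))`, because
`γ` lies within `r/2` of the centre `x`. So the triangle inequality through `γ` bounds
`dist(p, C)` linearly by `dist(p, γ) + (r − dist(p, x))`, and the power mean inequality
`(a + b)^z ≤ 2^(z-1) (a^z + b^z)` turns this into the bound on the `z`-th powers.
-/

theorem le_two_mul_dist_add_sub_dist {X : Type*} [PseudoMetricSpace X] {r : ℝ} {p γ x : X}
    (hγx : dist γ x ≤ r / 2) : r ≤ 2 * (dist p γ + (r - dist p x)) := by
  linarith [dist_triangle p γ x]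

theorem Metric.infDist_le_mul_dist_add_sub_dist {X : Type*} [PseudoMetricSpace X]
    {c r : ℝ} (hc : 0 ≤ c) {p γ x : X} {s : Set X}
    (hγx : dist γ x ≤ r / 2) (hγs : infDist γ s ≤ (2 * c + 1) * r) (hpx : dist p x ≤ r) :
    infDist p s ≤ (4 * c + 3) * (dist p γ + (r - dist p x)) := by
  have hr := le_two_mul_dist_add_sub_dist (p := p) hγx
  calc infDist p s ≤ infDist γ s + dist p γ := infDist_le_infDist_add_dist
    _ ≤ (2 * c + 1) * r + dist p γ := by gcongr
    _ ≤ (2 * c + 1) * (2 * (dist p γ + (r - dist p x))) + dist p γ := by gcongr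
    _ ≤ (4 * c + 3) * (dist p γ + (r - dist p x)) := by nlinarith

theorem pow_le_two_mul_pow_mul_add_pow {t K a b : ℝ} (n : ℕ) (ht : 0 ≤ t) (hK : 0 ≤ K)
    (ha : 0 ≤ a) (hb : 0 ≤ b) (h : t ≤ K * (a + b)) :
    t ^ n ≤ (2 * K) ^ n * (a ^ n + b ^ n) :=
  calc t ^ n ≤ K ^ n * (a + b) ^ n := by rw [← mul_pow]; gcongr
    _ ≤ K ^ n * (2 ^ n * (a ^ n + b ^ n)) := by
        gcongr
        calc (a + b) ^ n ≤ 2 ^ (n - 1) * (a ^ n + b ^ n) := add_pow_le ha hb n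
          _ ≤ 2 ^ n * (a ^ n + b ^ n) := by gcongr; exacts [one_le_two, n.sub_le 1]
    _ = (2 * K) ^ n * (a ^ n + b ^ n) := by rw [mul_pow]; ring

theorem inner_point_cost_bound_general {X : Type*} [MetricSpace X]
    (z : ℕ) (c r : ℝ) (hc : 0 ≤ c)
    (p γ x : X) (C : Finset X)
    (hγx : dist γ x ≤ r / 2)
    (hγC : Metric.infDist γ (↑C : Set X) ≤ (2 * c + 1) * r)
    (hpx : dist p x ≤ r) :
    Metric.infDist p (↑C : Set X) ^ z
      ≤ (16 * c + 24) ^ z * (dist p γ ^ z + (r - dist p x) ^ z) := by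
  have hinf := Metric.infDist_le_mul_dist_add_sub_dist hc hγx hγC hpx
  have hsum : 0 ≤ dist p γ + (r - dist p x) := by linarith [dist_nonneg (x := p) (y := γ)]
  have h16 : 16 * c + 24 = 2 * (8 * c + 12) := by ring
  rw [h16]
  refine pow_le_two_mul_pow_mul_add_pow z Metric.infDist_nonneg (by positivity) dist_nonneg
    (sub_nonneg.2 hpx) (hinf.trans ?_)
  gcongr <;> norm_num

/-- **Cost of an inner point of an optimal cluster.** Let `(X, dist)` be a metric
space, `z ≥ 1` an integer, `c ≥ 0` and `r > 0` reals, `p, γ, x ∈ X` and `C ⊆ X` finite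
and nonempty.  Assume `dist(γ, x) ≤ r/2`, `dist(γ, C) ≤ (2c+1)·r` and `dist(p, x) ≤ r`.
Then `dist(p, C)^z ≤ (16c+24)^z · (dist(p, γ)^z + (r − dist(p, x))^z)`. -/
theorem inner_point_cost_bound {X : Type*} [MetricSpace X]
    (z : ℕ) (hz : 1 ≤ z) (c r : ℝ) (hc : 0 ≤ c) (hr : 0 < r)
    (p γ x : X) (C : Finset X) (hC : C.Nonempty)
    (hγx : dist γ x ≤ r / 2)
    (hγC : Metric.infDist γ (↑C : Set X) ≤ (2 * c + 1) * r)
    (hpx : dist p x ≤ r) :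
    Metric.infDist p (↑C : Set X) ^ z
      ≤ (16 * c + 24) ^ z * (dist p γ ^ z + (r - dist p x) ^ z) :=
  inner_point_cost_bound_general z c r hc p γ x C hγx hγC hpx
end

section
/- Let (X, dist) be a metric space, let z ≥ 1 be an integer, let P be a finite multiset of points of X, let x, x' ∈ X, and let r > 0 and 0 < r' ≤ r/2 with dist(x, x') ≤ r/2. Then ∑_{p∈P, dist(p,x')≤r'} (r' − dist(p, x'))^z ≤ ∑_{p∈P, dist(p,x)≤r} (r − dist(p, x))^z, i.e., val(B(x', r')) ≤ val(B(x, r)). -/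
/-! Every point of the small ball `B(x', r')` lies in `B(x, r)` and contributes there a term that
is at least as large, by the triangle inequality through `x'`; the remaining terms of `val(B(x, r))`
are nonnegative. -/

namespace Multiset

variable {ι α : Type*} [AddCommMonoid α] [PartialOrder α] [IsOrderedAddMonoid α]

theorem sum_map_filter_le_sum_map_filter {s : Multiset ι} {p q : ι → Prop} [DecidablePred p]
    [DecidablePred q] {f g : ι → α} (hpq : ∀ i ∈ s, p i → q i ∧ f i ≤ g i)
    (hg : ∀ i ∈ s, q i → 0 ≤ g i) :
    ((s.filter p).map f).sum ≤ ((s.filter q).map g).sum := by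
  induction s using Multiset.induction_on with
  | empty => simp
  | cons a s ih =>
    have ih := ih (fun i hi => hpq i (mem_cons_of_mem hi)) (fun i hi => hg i (mem_cons_of_mem hi))
    by_cases hp : p a
    · obtain ⟨hq, hfg⟩ := hpq a (mem_cons_self a s) hp
      simpa [filter_cons_of_pos, hp, hq] using add_le_add hfg ih
    · by_cases hq : q a
      · simpa [filter_cons_of_neg, filter_cons_of_pos, hp, hq] using
          add_le_add (hg a (mem_cons_self a s) hq) ih
      · simpa [filter_cons_of_neg, hp, hq] using ih

end Multiset

theorem sub_dist_le_sub_dist {X : Type*} [PseudoMetricSpace X] (p : X) {x x' : X} {r r' : ℝ}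
    (h : r' + dist x x' ≤ r) : r' - dist p x' ≤ r - dist p x := by
  linarith [dist_triangle p x' x, dist_comm x x']

theorem ball_value_mono_general {X : Type*} [MetricSpace X]
    (z : ℕ) (P : Multiset X)
    (x x' : X) (r r' : ℝ) (hr'r : r' ≤ r / 2)
    (hxx' : dist x x' ≤ r / 2) :
    ((P.filter (fun p => dist p x' ≤ r')).map (fun p => (r' - dist p x') ^ z)).sum
      ≤ ((P.filter (fun p => dist p x ≤ r)).map (fun p => (r - dist p x) ^ z)).sum := by
  have hterm (p : X) : r' - dist p x' ≤ r - dist p x := sub_dist_le_sub_dist p (by linarith)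
  refine Multiset.sum_map_filter_le_sum_map_filter (fun p _ hp => ?_) (fun p _ hp => ?_)
  · have hp' : 0 ≤ r' - dist p x' := sub_nonneg.2 hp
    exact ⟨by linarith [hterm p], pow_le_pow_left₀ hp' (hterm p) z⟩
  · exact pow_nonneg (sub_nonneg.2 hp) z

/-- **Monotonicity of the ball value.** Let `(X, dist)` be a metric space, `z ≥ 1` an
integer, `P` a finite multiset of points of `X`, `x, x' ∈ X`, `r > 0` and
`0 < r' ≤ r/2` with `dist(x, x') ≤ r/2`.  Then
`∑_{p∈P, dist(p,x')≤r'} (r' − dist(p, x'))^z ≤ ∑_{p∈P, dist(p,x)≤r} (r − dist(p, x))^z`,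
i.e. `val(B(x', r')) ≤ val(B(x, r))`. -/
theorem ball_value_mono {X : Type*} [MetricSpace X]
    (z : ℕ) (hz : 1 ≤ z) (P : Multiset X)
    (x x' : X) (r r' : ℝ) (hr : 0 < r) (hr' : 0 < r') (hr'r : r' ≤ r / 2)
    (hxx' : dist x x' ≤ r / 2) :
    ((P.filter (fun p => dist p x' ≤ r')).map (fun p => (r' - dist p x') ^ z)).sum
      ≤ ((P.filter (fun p => dist p x ≤ r)).map (fun p => (r - dist p x) ^ z)).sum :=
  ball_value_mono_general z P x x' r r' hr'r hxx'
end

section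
/- Let (X, dist) be a metric space, let α ∈ (0,1], let ℓ ≥ 10/α be a real, let p, v ∈ X, let C ⊆ X be finite and nonempty, and let a ∈ C be a nearest point of C to v, i.e., dist(v, a) = dist(v, C). If dist(p, C) ≥ ℓ·dist(p, v), then dist(p, a)² ≤ (1+α)·dist(p, C)². -/
open Metric

theorem dist_le_two_mul_dist_add_infDist {X : Type*} [PseudoMetricSpace X] {s : Set X}
    {p v a : X} (hnear : dist v a = infDist v s) :
    dist p a ≤ 2 * dist p v + infDist p s := by
  have hv : infDist v s ≤ infDist p s + dist v p := infDist_le_infDist_add_dist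
  calc dist p a ≤ dist p v + dist v a := dist_triangle p v a
    _ ≤ 2 * dist p v + infDist p s := by rw [hnear]; linarith [dist_comm v p]

theorem sq_one_add_div_five_le {α : ℝ} (hα0 : 0 ≤ α) (hα1 : α ≤ 1) :
    (1 + α / 5) ^ 2 ≤ 1 + α := by
  nlinarith

theorem reassignment_cost_bound_general {X : Type*} [MetricSpace X]
    (α : ℝ) (hα0 : 0 < α) (hα1 : α ≤ 1) (ℓ : ℝ) (hℓ : 10 / α ≤ ℓ)
    (p v : X) (C : Finset X)
    (a : X) (hnear : dist v a = Metric.infDist v (↑C : Set X))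
    (hfar : ℓ * dist p v ≤ Metric.infDist p (↑C : Set X)) :
    dist p a ^ 2 ≤ (1 + α) * Metric.infDist p (↑C : Set X) ^ 2 := by
  set D := infDist p (C : Set X)
  have hαℓ : 10 ≤ α * ℓ := (div_le_iff₀' hα0).1 hℓ
  have hdetour : 10 * dist p v ≤ α * D := by
    calc 10 * dist p v ≤ α * ℓ * dist p v := by gcongr
      _ = α * (ℓ * dist p v) := mul_assoc _ _ _
      _ ≤ α * D := by gcongr
  have hpa : dist p a ≤ (1 + α / 5) * D := by
    linarith [dist_le_two_mul_dist_add_infDist (p := p) hnear]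
  calc dist p a ^ 2 ≤ ((1 + α / 5) * D) ^ 2 := by gcongr
    _ = (1 + α / 5) ^ 2 * D ^ 2 := mul_pow _ _ _
    _ ≤ (1 + α) * D ^ 2 := by gcongr; exact sq_one_add_div_five_le hα0.le hα1

/-- **Reassigning a far point to the center nearest to its cell representative.**
Let `(X, dist)` be a metric space, `α ∈ (0,1]`, `ℓ ≥ 10/α` a real, `p, v ∈ X`, `C ⊆ X`
finite and nonempty, and let `a ∈ C` be a nearest point of `C` to `v`, i.e.
`dist(v, a) = dist(v, C)`.  If `dist(p, C) ≥ ℓ·dist(p, v)`, then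
`dist(p, a)² ≤ (1+α)·dist(p, C)²`. -/
theorem reassignment_cost_bound {X : Type*} [MetricSpace X]
    (α : ℝ) (hα0 : 0 < α) (hα1 : α ≤ 1) (ℓ : ℝ) (hℓ : 10 / α ≤ ℓ)
    (p v : X) (C : Finset X) (hC : C.Nonempty)
    (a : X) (ha : a ∈ C) (hnear : dist v a = Metric.infDist v (↑C : Set X))
    (hfar : ℓ * dist p v ≤ Metric.infDist p (↑C : Set X)) :
    dist p a ^ 2 ≤ (1 + α) * Metric.infDist p (↑C : Set X) ^ 2 :=
  reassignment_cost_bound_general α hα0 hα1 ℓ hℓ p v C a hnear hfar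
end

section
/- Let R be a nonempty finite set, let f : R → ℝ, and let λ > 0. Define the probability distribution p on R by p(r) = exp(λ·f(r)) / ∑_{r'∈R} exp(λ·f(r')). Then for every t > 0, ∑_{r∈R : f(r) < max_{r'∈R} f(r') − (ln|R| + t)/λ} p(r) ≤ e^{−t}. In other words, with probability at least 1 − e^{−t}, an element sampled from p has score within (ln|R| + t)/λ of the maximum score. -/
/-! Since the normalising sum dominates its largest term, `p r ≤ exp (λ (f r - max f))`; below the
threshold this is at most `e^{-t} / |R|`, and there are at most `|R|` such elements. -/

open Finset Real

theorem exp_mul_sup'_le_sum_exp {Ω : Type*} (s : Finset Ω) (hs : s.Nonempty) (f : Ω → ℝ)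
    (lam : ℝ) : exp (lam * s.sup' hs f) ≤ ∑ r ∈ s, exp (lam * f r) := by
  obtain ⟨r₀, hr₀, hsup⟩ := exists_mem_eq_sup' hs f
  rw [hsup]
  exact single_le_sum (f := fun r => exp (lam * f r)) (fun _ _ => (exp_pos _).le) hr₀

theorem exp_div_sum_exp_le_exp_sub_sup' {Ω : Type*} (s : Finset Ω) (hs : s.Nonempty)
    (f : Ω → ℝ) (lam : ℝ) (r : Ω) :
    exp (lam * f r) / ∑ r' ∈ s, exp (lam * f r') ≤ exp (lam * (f r - s.sup' hs f)) := by
  rw [mul_sub, exp_sub]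
  exact div_le_div_of_nonneg_left (exp_pos _).le (exp_pos _) (exp_mul_sup'_le_sum_exp s hs f lam)

theorem exponential_mechanism_utility_general {Ω : Type*}
    (R : Finset Ω) (hR : R.Nonempty) (f : Ω → ℝ)
    (lam : ℝ) (hlam : 0 < lam) (t : ℝ) :
    ∑ r ∈ R.filter
        (fun r => f r < R.sup' hR f - (Real.log R.card + t) / lam),
        Real.exp (lam * f r) / ∑ r' ∈ R, Real.exp (lam * f r')
      ≤ Real.exp (-t) := by
  set M := R.sup' hR f
  have hcard : (0 : ℝ) < R.card := by exact_mod_cast card_pos.mpr hR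
  have term_le : ∀ r ∈ R.filter (fun r => f r < M - (log R.card + t) / lam),
      exp (lam * f r) / ∑ r' ∈ R, exp (lam * f r') ≤ exp (-t) / R.card := by
    intro r hr
    have hlt : lam * (f r - M) < -(log R.card + t) := by
      have := mul_lt_mul_of_pos_left (mem_filter.mp hr).2 hlam
      rw [mul_sub, mul_div_cancel₀ _ hlam.ne'] at this
      linarith
    calc exp (lam * f r) / ∑ r' ∈ R, exp (lam * f r') ≤ exp (lam * (f r - M)) :=
          exp_div_sum_exp_le_exp_sub_sup' R hR f lam r
      _ ≤ exp (-(log R.card + t)) := exp_le_exp.mpr hlt.le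
      _ = exp (-t) / R.card := by rw [neg_add, exp_add, exp_neg, exp_log hcard]; ring
  calc _ ≤ #(R.filter (fun r => f r < M - (log R.card + t) / lam)) • (exp (-t) / R.card) :=
        sum_le_card_nsmul _ _ _ term_le
    _ ≤ #R • (exp (-t) / R.card) :=
        nsmul_le_nsmul_left (by positivity) (card_filter_le _ _)
    _ = exp (-t) := by rw [nsmul_eq_mul]; field_simp

/-- **Utility of the exponential mechanism.** Let `R` be a nonempty finite set,
`f : R → ℝ` a score function, and `λ > 0`.  Sample `r ∈ R` with probability
`p(r) = exp(λ·f(r)) / ∑_{r'∈R} exp(λ·f(r'))`.  Then for every `t > 0`, the total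
probability of the elements whose score is below `max f − (ln|R| + t)/λ` is at most
`e^{−t}`; i.e. with probability at least `1 − e^{−t}` the sampled element has score
within `(ln|R| + t)/λ` of the maximum. -/
theorem exponential_mechanism_utility {Ω : Type*}
    (R : Finset Ω) (hR : R.Nonempty) (f : Ω → ℝ)
    (lam : ℝ) (hlam : 0 < lam) (t : ℝ) (ht : 0 < t) :
    ∑ r ∈ R.filter
        (fun r => f r < R.sup' hR f - (Real.log R.card + t) / lam),
        Real.exp (lam * f r) / ∑ r' ∈ R, Real.exp (lam * f r')
      ≤ Real.exp (-t) :=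
  exponential_mechanism_utility_general R hR f lam hlam t
end

section
/- Let R be a nonempty finite set, let λ > 0 and Δ ≥ 0 be reals, and let f, g : R → ℝ satisfy |f(r) − g(r)| ≤ Δ for every r ∈ R. Define the probability distributions p_f(r) = exp(λ·f(r)) / ∑_{r'∈R} exp(λ·f(r')) and p_g(r) = exp(λ·g(r)) / ∑_{r'∈R} exp(λ·g(r')). Then p_f(r) ≤ exp(2λΔ)·p_g(r) for every r ∈ R. -/
/-! Scores that differ by at most `Δ` change every weight `exp (λ f r)` by a factor at most
`exp (λ Δ)`; this factor is paid once in the numerator of `p_f(r)` and once more in the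
normalising sum, hence `exp (2 λ Δ)`. -/

open Finset Real

theorem div_sum_le_sq_mul_div_sum {ι : Type*} {s : Finset ι} {u v : ι → ℝ} {c : ℝ}
    (hu : ∀ i ∈ s, 0 < u i) (hv : ∀ i ∈ s, 0 < v i)
    (huv : ∀ i ∈ s, u i ≤ c * v i) (hvu : ∀ i ∈ s, v i ≤ c * u i) {r : ι} (hr : r ∈ s) :
    u r / ∑ i ∈ s, u i ≤ c ^ 2 * (v r / ∑ i ∈ s, v i) := by
  have hSu : 0 < ∑ i ∈ s, u i := sum_pos hu ⟨r, hr⟩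
  have hSv : 0 < ∑ i ∈ s, v i := sum_pos hv ⟨r, hr⟩
  have hcv : 0 ≤ c * v r := (hu r hr).le.trans (huv r hr)
  have hsum : ∑ i ∈ s, v i ≤ c * ∑ i ∈ s, u i := by
    rw [mul_sum]
    exact sum_le_sum hvu
  calc u r / ∑ i ∈ s, u i
      ≤ c * v r * (1 / ∑ i ∈ s, u i) := by
        rw [← div_eq_mul_one_div]
        exact div_le_div_of_nonneg_right (huv r hr) hSu.le
    _ ≤ c * v r * (c / ∑ i ∈ s, v i) := by
        refine mul_le_mul_of_nonneg_left ?_ hcv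
        rw [div_le_div_iff₀ hSu hSv]
        linarith
    _ = c ^ 2 * (v r / ∑ i ∈ s, v i) := by ring

theorem exp_mul_le_exp_mul_mul_exp_mul {lam a b Δ : ℝ} (hlam : 0 ≤ lam) (h : a ≤ b + Δ) :
    exp (lam * a) ≤ exp (lam * Δ) * exp (lam * b) := by
  rw [← exp_add, exp_le_exp]
  nlinarith

theorem exponential_mechanism_privacy_general {Ω : Type*}
    (R : Finset Ω)
    (lam Δ : ℝ) (hlam : 0 < lam)
    (f g : Ω → ℝ) (hfg : ∀ r ∈ R, |f r - g r| ≤ Δ) :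
    ∀ r ∈ R,
      Real.exp (lam * f r) / ∑ r' ∈ R, Real.exp (lam * f r')
        ≤ Real.exp (2 * lam * Δ)
            * (Real.exp (lam * g r) / ∑ r' ∈ R, Real.exp (lam * g r')) := by
  intro r hr
  have hfactor : exp (2 * lam * Δ) = exp (lam * Δ) ^ 2 := by
    rw [sq, ← exp_add]
    ring_nf
  rw [hfactor]
  refine div_sum_le_sq_mul_div_sum (fun _ _ => exp_pos _) (fun _ _ => exp_pos _)
    (fun i hi => exp_mul_le_exp_mul_mul_exp_mul hlam.le ?_)
    (fun i hi => exp_mul_le_exp_mul_mul_exp_mul hlam.le ?_) hr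
  · linarith [(abs_le.1 (hfg i hi)).2]
  · linarith [(abs_le.1 (hfg i hi)).1]

/-- **Privacy of the exponential mechanism.** Let `R` be a nonempty finite set,
`λ > 0` and `Δ ≥ 0` reals, and let `f, g : R → ℝ` satisfy `|f(r) − g(r)| ≤ Δ` for every
`r ∈ R`.  Define `p_f(r) = exp(λ·f(r)) / ∑_{r'∈R} exp(λ·f(r'))` and similarly `p_g`.
Then `p_f(r) ≤ exp(2λΔ)·p_g(r)` for every `r ∈ R`. -/
theorem exponential_mechanism_privacy {Ω : Type*}
    (R : Finset Ω) (hR : R.Nonempty)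
    (lam Δ : ℝ) (hlam : 0 < lam) (hΔ : 0 ≤ Δ)
    (f g : Ω → ℝ) (hfg : ∀ r ∈ R, |f r - g r| ≤ Δ) :
    ∀ r ∈ R,
      Real.exp (lam * f r) / ∑ r' ∈ R, Real.exp (lam * f r')
        ≤ Real.exp (2 * lam * Δ)
            * (Real.exp (lam * g r) / ∑ r' ∈ R, Real.exp (lam * g r')) :=
  exponential_mechanism_privacy_general R lam Δ hlam f g hfg
end
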